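/- arXiv:2603.09019 — 7 statements merged into one kernel-verified Lean document; each statement's English description precedes it below -/
import Mathlib

section
/- b = ∑_{i=1}^n (W_i − T_i/2) · ∏_{j≠i} (1 − 2T_j), i.e., E[X·(−1)^S] equals this explicit sum. -/
open MeasureTheory ProbabilityTheory Finset
open scoped Classical

/-!
Write `(-1)^S = ∏ⱼ s(Xⱼ)` with `s(x) = -1` at `x = 1/2` and `s(x) = 1` elsewhere, so that the
integrand is `∑ᵢ Xᵢ s(Xᵢ) ∏_{j ≠ i} s(Xⱼ)`. By independence each term has expectation
`E[Xᵢ s(Xᵢ)] ∏_{j ≠ i} E[s(Xⱼ)]`, and since the three masses sum to one, `Xᵢ` takes only the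
values `0, 1/2, 1` almost surely, which gives `E[Xᵢ s(Xᵢ)] = Wᵢ - Tᵢ/2` and `E[s(Xⱼ)] = 1 - 2Tⱼ`.
-/

noncomputable def halfSign (x : ℝ) : ℝ := if x = 1 / 2 then -1 else 1

@[fun_prop]
lemma measurable_halfSign : Measurable halfSign :=
  Measurable.ite (measurableSet_singleton _) measurable_const measurable_const

lemma abs_halfSign (x : ℝ) : |halfSign x| = 1 := by
  unfold halfSign; split_ifs <;> norm_num

lemma prod_halfSign_eq_neg_one_pow_card {ι : Type*} (s : Finset ι) (x : ι → ℝ) :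
    ∏ j ∈ s, halfSign (x j) = (-1 : ℝ) ^ (s.filter (fun j => x j = 1 / 2)).card := by
  simp only [halfSign, prod_ite, prod_const, one_pow, mul_one]

lemma sum_mul_prod_eq_sum_mul_prod_erase {ι R : Type*} [Fintype ι] [DecidableEq ι]
    [CommSemiring R] (x g : ι → R) :
    (∑ i, x i) * ∏ j, g j = ∑ i, x i * g i * ∏ j ∈ univ.erase i, g j := by
  simp only [sum_mul, mul_assoc, mul_prod_erase univ g (mem_univ _)]

lemma prod_apply_update {ι α M : Type*} [Fintype ι] [DecidableEq ι] [CommMonoid M]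
    (Φ : ι → α → M) (F : ι → α) (i : ι) (a : α) :
    ∏ j, Φ j (Function.update F i a j) = Φ i a * ∏ j ∈ univ.erase i, Φ j (F j) := by
  simp only [Function.apply_update Φ, prod_update_of_mem (mem_univ i), sdiff_singleton_eq_erase]

section FiniteSupport

variable {Ω α : Type*} [MeasurableSpace Ω] {μ : Measure Ω} {Y : Ω → α} {s : Finset α}

lemma comp_ae_eq_sum_indicator {E : Type*} [AddCommMonoid E] (f : α → E) (hs : ∀ᵐ ω ∂μ, Y ω ∈ s) :
    (fun ω => f (Y ω)) =ᵐ[μ] fun ω => ∑ a ∈ s, {ω | Y ω = a}.indicator (fun _ => f a) ω := by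
  filter_upwards [hs] with ω hω
  simp only [Set.indicator_apply, Set.mem_ofPred_eq, sum_ite_eq, hω, if_true]

variable [MeasurableSpace α] [MeasurableSingletonClass α]

lemma ae_mem_of_sum_measureReal_eq_one [IsProbabilityMeasure μ] (hY : Measurable Y)
    (h : ∑ a ∈ s, μ.real {ω | Y ω = a} = 1) : ∀ᵐ ω ∂μ, Y ω ∈ s := by
  refine (mem_ae_iff_prob_eq_one (hY s.measurableSet)).2 ?_
  rwa [← ENNReal.toReal_eq_one_iff, ← measureReal_def,
    ← sum_measureReal_preimage_singleton s fun a _ => hY (measurableSet_singleton a)]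

variable [IsFiniteMeasure μ]

lemma integrable_comp_of_ae_mem {E : Type*} [NormedAddCommGroup E] (hY : Measurable Y)
    (f : α → E) (hs : ∀ᵐ ω ∂μ, Y ω ∈ s) :
    Integrable (fun ω => f (Y ω)) μ :=
  (integrable_finsetSum s fun a _ => (integrable_const (f a)).indicator
    (hY (measurableSet_singleton a))).congr (comp_ae_eq_sum_indicator f hs).symm

lemma integral_comp_eq_sum_of_ae_mem {E : Type*} [NormedAddCommGroup E] [NormedSpace ℝ E]
    [CompleteSpace E] (hY : Measurable Y) (f : α → E) (hs : ∀ᵐ ω ∂μ, Y ω ∈ s) :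
    ∫ ω, f (Y ω) ∂μ = ∑ a ∈ s, μ.real {ω | Y ω = a} • f a := by
  rw [integral_congr_ae (comp_ae_eq_sum_indicator f hs), integral_finsetSum]
  · exact sum_congr rfl fun a _ => integral_indicator_const _ (hY (measurableSet_singleton a))
  · exact fun a _ => (integrable_const (f a)).indicator (hY (measurableSet_singleton a))

end FiniteSupport

section Trinomial

variable {Ω : Type*} [MeasurableSpace Ω] {μ : Measure Ω} [IsProbabilityMeasure μ] {Y : Ω → ℝ}
  {t w : ℝ}

lemma ae_mem_of_measureReal_trinomial (hY : Measurable Y) (ht : μ.real {ω | Y ω = 1 / 2} = t)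
    (hw : μ.real {ω | Y ω = 1} = w) (hl : μ.real {ω | Y ω = 0} = 1 - t - w) :
    ∀ᵐ ω ∂μ, Y ω ∈ ({1 / 2, 1, 0} : Finset ℝ) := by
  refine ae_mem_of_sum_measureReal_eq_one hY ?_
  rw [sum_insert (by norm_num), sum_pair (by norm_num), ht, hw, hl]
  ring

lemma integral_comp_of_measureReal_trinomial (hY : Measurable Y)
    (ht : μ.real {ω | Y ω = 1 / 2} = t) (hw : μ.real {ω | Y ω = 1} = w)
    (hl : μ.real {ω | Y ω = 0} = 1 - t - w) (f : ℝ → ℝ) :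
    ∫ ω, f (Y ω) ∂μ = t * f (1 / 2) + w * f 1 + (1 - t - w) * f 0 := by
  rw [integral_comp_eq_sum_of_ae_mem hY f (ae_mem_of_measureReal_trinomial hY ht hw hl),
    sum_insert (by norm_num), sum_pair (by norm_num), ht, hw, hl]
  simp only [smul_eq_mul, add_assoc]

end Trinomial

lemma ProbabilityTheory.iIndepFun.integral_mul_prod_erase {Ω ι 𝓧 : Type*} [Fintype ι]
    [DecidableEq ι] [MeasurableSpace Ω] {μ : Measure Ω} [MeasurableSpace 𝓧] {X : ι → Ω → 𝓧}
    (hX : iIndepFun X μ) (mX : ∀ j, Measurable (X j)) {f g : 𝓧 → ℝ}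
    (hf : Measurable f) (hg : Measurable g) (i : ι) :
    ∫ ω, f (X i ω) * ∏ j ∈ univ.erase i, g (X j ω) ∂μ
      = (∫ ω, f (X i ω) ∂μ) * ∏ j ∈ univ.erase i, ∫ ω, g (X j ω) ∂μ := by
  have hF : ∀ j, Measurable (Function.update (fun _ => g) i f j) := by
    intro j
    rcases eq_or_ne j i with rfl | hj
    · simpa using hf
    · simpa [hj] using hg
  have := hX.integral_fun_prod_comp (fun j => (mX j).aemeasurable)
    (fun j => (hF j).aestronglyMeasurable)
  have hpt : ∀ ω, ∏ j, Function.update (fun _ => g) i f j (X j ω)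
      = f (X i ω) * ∏ j ∈ univ.erase i, g (X j ω) :=
    fun ω => prod_apply_update (fun j u => u (X j ω)) _ i f
  simpa only [hpt, prod_apply_update (fun j (u : 𝓧 → ℝ) => ∫ ω, u (X j ω) ∂μ)] using this

theorem poisson_trinomial_b_eq_sum_general
    {Ω : Type*} [MeasureSpace Ω] [IsProbabilityMeasure (ℙ : Measure Ω)]
    {n : ℕ} (X : Fin n → Ω → ℝ) (T W : Fin n → ℝ)
    (hmeas : ∀ i, Measurable (X i))
    (hindep : iIndepFun X ℙ)
    (hT : ∀ i, (ℙ {ω | X i ω = 1/2}).toReal = T i)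
    (hW : ∀ i, (ℙ {ω | X i ω = 1}).toReal = W i)
    (hL : ∀ i, (ℙ {ω | X i ω = 0}).toReal = 1 - T i - W i)
    (b : ℝ)
    (hb : b = ∫ ω, (∑ i, X i ω) *
        (-1 : ℝ) ^ (univ.filter (fun i => X i ω = 1/2)).card ∂ℙ) :
    b = ∑ i, (W i - T i / 2) * ∏ j ∈ univ.erase i, (1 - 2 * T j) := by
  have hsupp i := ae_mem_of_measureReal_trinomial (hmeas i) (hT i) (hW i) (hL i)
  have hmean i := integral_comp_of_measureReal_trinomial (hmeas i) (hT i) (hW i) (hL i)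
  have hsign : ∀ j, ∫ ω, halfSign (X j ω) ∂ℙ = 1 - 2 * T j := fun j => by
    rw [hmean]; norm_num [halfSign]; ring
  have hlin : ∀ i, ∫ ω, X i ω * halfSign (X i ω) ∂ℙ = W i - T i / 2 := fun i => by
    rw [hmean i (fun x => x * halfSign x)]; norm_num [halfSign]; ring
  have hint : ∀ i, Integrable (fun ω => X i ω * halfSign (X i ω) *
      ∏ j ∈ univ.erase i, halfSign (X j ω)) ℙ := fun i =>
    (integrable_comp_of_ae_mem (hmeas i) (fun x => x * halfSign x) (hsupp i)).mul_bdd (c := 1)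
      (measurable_prod _ fun j _ => measurable_halfSign.comp (hmeas j)).aestronglyMeasurable
      (ae_of_all _ fun ω => by simp [abs_halfSign])
  simp only [hb, ← prod_halfSign_eq_neg_one_pow_card, sum_mul_prod_eq_sum_mul_prod_erase]
  rw [integral_finsetSum _ fun i _ => hint i]
  refine sum_congr rfl fun i _ => ?_
  rw [hindep.integral_mul_prod_erase hmeas (f := fun x => x * halfSign x) (by fun_prop)
    measurable_halfSign, hlin, prod_congr rfl fun j _ => hsign j]

/-- `b = E[X·(-1)^S] = ∑_i (W_i - T_i/2) ∏_{j ≠ i} (1 - 2 T_j)`. -/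
theorem poisson_trinomial_b_eq_sum
    {Ω : Type*} [MeasureSpace Ω] [IsProbabilityMeasure (ℙ : Measure Ω)]
    {n : ℕ} (X : Fin n → Ω → ℝ) (T W : Fin n → ℝ)
    (hmeas : ∀ i, Measurable (X i))
    (hindep : iIndepFun X ℙ)
    (hT0 : ∀ i, 0 ≤ T i) (hW0 : ∀ i, 0 ≤ W i) (hTW1 : ∀ i, T i + W i ≤ 1)
    (hT : ∀ i, (ℙ {ω | X i ω = 1/2}).toReal = T i)
    (hW : ∀ i, (ℙ {ω | X i ω = 1}).toReal = W i)
    (hL : ∀ i, (ℙ {ω | X i ω = 0}).toReal = 1 - T i - W i)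
    (b : ℝ)
    (hb : b = ∫ ω, (∑ i, X i ω) *
        (-1 : ℝ) ^ (univ.filter (fun i => X i ω = 1/2)).card ∂ℙ) :
    b = ∑ i, (W i - T i / 2) * ∏ j ∈ univ.erase i, (1 - 2 * T j) :=
  poisson_trinomial_b_eq_sum_general X T W hmeas hindep hT hW hL b hb
end

section
/- P(X ∈ ℤ) = (1 + a)/2, E[X·1_{X ∈ ℤ}] = (μ + b)/2, P(X ∈ ℤ + 1/2) = (1 − a)/2, and E[X·1_{X ∈ ℤ + 1/2}] = (μ − b)/2. -/
/-!
Writing `S` for the number of summands equal to `1/2`, the sum `X` equals the number of summands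
equal to `1` plus `S/2`, so `X ∈ ℤ` exactly when `S` is even and `X ∈ ℤ + 1/2` exactly when `S` is
odd. The indicators of these events are `(1 ± (-1)^S)/2`; integrating them, and `X` times them,
gives the four identities.
-/

open MeasureTheory ProbabilityTheory Finset
open scoped Classical

theorem exists_intCast_eq_add_half_iff_even (k : ℤ) (S : ℕ) :
    (∃ m : ℤ, (k : ℝ) + S / 2 = m) ↔ Even S := by
  constructor
  · rintro ⟨m, hm⟩
    have hS : ((S : ℤ) : ℝ) = ((2 * (m - k) : ℤ) : ℝ) := by push_cast; linarith
    exact (Int.even_coe_nat S).mp ⟨m - k, by rw [Int.cast_inj.mp hS]; ring⟩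
  · rintro ⟨t, rfl⟩
    exact ⟨k + t, by push_cast; ring⟩

theorem exists_intCast_add_half_eq_add_half_iff_odd (k : ℤ) (S : ℕ) :
    (∃ m : ℤ, (k : ℝ) + S / 2 = m + 1 / 2) ↔ Odd S := by
  constructor
  · rintro ⟨m, hm⟩
    have hS : ((S : ℤ) : ℝ) = ((2 * (m - k) + 1 : ℤ) : ℝ) := by push_cast; linarith
    exact (Int.odd_coe_nat S).mp ⟨m - k, Int.cast_inj.mp hS⟩
  · rintro ⟨t, rfl⟩
    exact ⟨k + t, by push_cast; ring⟩

section TrinomialSum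

variable {ι : Type*} [Fintype ι] {x : ι → ℝ}

theorem sum_eq_card_one_add_card_half (hx : ∀ i, x i = 0 ∨ x i = 1 / 2 ∨ x i = 1) :
    ∑ i, x i = #{i | x i = 1} + #{i | x i = 1 / 2} / 2 := by
  have hsplit : ∀ i, x i = (if x i = 1 then 1 else 0) + (if x i = 1 / 2 then 1 else 0) / 2 := by
    intro i
    rcases hx i with h | h | h <;> norm_num [h]
  rw [sum_congr rfl fun i _ => hsplit i, sum_add_distrib, ← sum_div, sum_boole, sum_boole]

theorem exists_int_sum_eq_iff_even (hx : ∀ i, x i = 0 ∨ x i = 1 / 2 ∨ x i = 1) :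
    (∃ m : ℤ, ∑ i, x i = m) ↔ Even #{i | x i = 1 / 2} := by
  rw [sum_eq_card_one_add_card_half hx, ← exists_intCast_eq_add_half_iff_even #{i | x i = 1}]
  norm_cast

theorem exists_int_sum_eq_add_half_iff_odd (hx : ∀ i, x i = 0 ∨ x i = 1 / 2 ∨ x i = 1) :
    (∃ m : ℤ, ∑ i, x i = m + 1 / 2) ↔ Odd #{i | x i = 1 / 2} := by
  rw [sum_eq_card_one_add_card_half hx,
    ← exists_intCast_add_half_eq_add_half_iff_odd #{i | x i = 1}]
  norm_cast

end TrinomialSum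

theorem ite_even_eq_half_add_mul_neg_one_pow (S : ℕ) (c : ℝ) :
    (if Even S then c else 0) = (c + c * (-1) ^ S) / 2 := by
  rcases Nat.even_or_odd S with h | h
  · simp [h, h.neg_one_pow]
  · simp [Nat.not_even_iff_odd.mpr h, h.neg_one_pow]

theorem ite_odd_eq_half_sub_mul_neg_one_pow (S : ℕ) (c : ℝ) :
    (if Odd S then c else 0) = (c - c * (-1) ^ S) / 2 := by
  rcases Nat.even_or_odd S with h | h
  · simp [Nat.not_odd_iff_even.mpr h, h.neg_one_pow]
  · simp [h, h.neg_one_pow]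

section ParityEvents

variable {Ω : Type*} [MeasurableSpace Ω] {μ : Measure Ω} {S : Ω → ℕ} {f : Ω → ℝ}

theorem integrable_mul_neg_one_pow (hS : Measurable S) (hf : Integrable f μ) :
    Integrable (fun ω => f ω * (-1) ^ S ω) μ :=
  hf.mul_bdd (c := 1) ((measurable_const.pow hS).aestronglyMeasurable) (by simp)

theorem setIntegral_even_eq (hS : Measurable S) (hf : Integrable f μ) :
    ∫ ω in {ω | Even (S ω)}, f ω ∂μ = ((∫ ω, f ω ∂μ) + ∫ ω, f ω * (-1) ^ S ω ∂μ) / 2 := by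
  have hE : MeasurableSet {ω | Even (S ω)} := hS (.of_discrete (s := {k | Even k}))
  rw [← integral_indicator hE, ← integral_add hf (integrable_mul_neg_one_pow hS hf),
    ← integral_div]
  congr 1 with ω
  simp only [Set.indicator_apply, Set.mem_ofPred_eq, ite_even_eq_half_add_mul_neg_one_pow]

theorem setIntegral_odd_eq (hS : Measurable S) (hf : Integrable f μ) :
    ∫ ω in {ω | Odd (S ω)}, f ω ∂μ = ((∫ ω, f ω ∂μ) - ∫ ω, f ω * (-1) ^ S ω ∂μ) / 2 := by
  have hE : MeasurableSet {ω | Odd (S ω)} := hS (.of_discrete (s := {k | Odd k}))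
  rw [← integral_indicator hE, ← integral_sub hf (integrable_mul_neg_one_pow hS hf),
    ← integral_div]
  congr 1 with ω
  simp only [Set.indicator_apply, Set.mem_ofPred_eq, ite_odd_eq_half_sub_mul_neg_one_pow]

variable [IsProbabilityMeasure μ]

theorem measureReal_even_eq (hS : Measurable S) :
    μ.real {ω | Even (S ω)} = (1 + ∫ ω, (-1 : ℝ) ^ S ω ∂μ) / 2 := by
  simpa using setIntegral_even_eq (μ := μ) (f := 1) hS (integrable_const 1)

theorem measureReal_odd_eq (hS : Measurable S) :
    μ.real {ω | Odd (S ω)} = (1 - ∫ ω, (-1 : ℝ) ^ S ω ∂μ) / 2 := by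
  simpa using setIntegral_odd_eq (μ := μ) (f := 1) hS (integrable_const 1)

end ParityEvents

theorem ae_mem_of_sum_measureReal_preimage_singleton_eq_one {Ω β : Type*} [MeasurableSpace Ω]
    [MeasurableSpace β] [MeasurableSingletonClass β] {μ : Measure Ω} [IsProbabilityMeasure μ]
    {Y : Ω → β} (hY : Measurable Y) (s : Finset β) (hs : ∑ v ∈ s, μ.real (Y ⁻¹' {v}) = 1) :
    ∀ᵐ ω ∂μ, Y ω ∈ s := by
  rw [sum_measureReal_preimage_singleton s fun v _ => hY (measurableSet_singleton v)] at hs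
  refine (ae_mem_iff_measure_eq (hY s.measurableSet).nullMeasurableSet).mpr ?_
  rwa [measure_univ, ← ENNReal.toReal_eq_one_iff]

theorem poisson_trinomial_parity_probabilities_general
    {Ω : Type*} [MeasureSpace Ω] [IsProbabilityMeasure (ℙ : Measure Ω)]
    {n : ℕ} (X : Fin n → Ω → ℝ) (T W : Fin n → ℝ)
    (hmeas : ∀ i, Measurable (X i))
    (hT : ∀ i, (ℙ {ω | X i ω = 1/2}).toReal = T i)
    (hW : ∀ i, (ℙ {ω | X i ω = 1}).toReal = W i)
    (hL : ∀ i, (ℙ {ω | X i ω = 0}).toReal = 1 - T i - W i)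
    (μ a b : ℝ)
    (hμ : μ = ∫ ω, ∑ i, X i ω ∂ℙ)
    (ha : a = ∫ ω, (-1 : ℝ) ^ (univ.filter (fun i => X i ω = 1/2)).card ∂ℙ)
    (hb : b = ∫ ω, (∑ i, X i ω) *
        (-1 : ℝ) ^ (univ.filter (fun i => X i ω = 1/2)).card ∂ℙ) :
    (ℙ {ω | ∃ m : ℤ, (∑ i, X i ω) = (m : ℝ)}).toReal = (1 + a) / 2 ∧
    (∫ ω in {ω | ∃ m : ℤ, (∑ i, X i ω) = (m : ℝ)}, ∑ i, X i ω ∂ℙ) = (μ + b) / 2 ∧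
    (ℙ {ω | ∃ m : ℤ, (∑ i, X i ω) = (m : ℝ) + 1/2}).toReal = (1 - a) / 2 ∧
    (∫ ω in {ω | ∃ m : ℤ, (∑ i, X i ω) = (m : ℝ) + 1/2}, ∑ i, X i ω ∂ℙ)
      = (μ - b) / 2 := by
  set S : Ω → ℕ := fun ω => #{i | X i ω = 1/2}
  have hvals : ∀ᵐ ω ∂ℙ, ∀ i, X i ω = 0 ∨ X i ω = 1/2 ∨ X i ω = 1 := by
    refine ae_all_iff.mpr fun i => ?_
    have hsum : ∑ v ∈ ({0, 1/2, 1} : Finset ℝ), (ℙ : Measure Ω).real (X i ⁻¹' {v}) = 1 := by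
      rw [sum_insert (by norm_num), sum_pair (by norm_num)]
      simp only [measureReal_def, Set.preimage, Set.mem_singleton_iff, hL, hT, hW]
      ring
    filter_upwards [ae_mem_of_sum_measureReal_preimage_singleton_eq_one (hmeas i) _ hsum]
      with ω h
    simpa using h
  have hS : Measurable S := by
    simp only [S, card_filter]
    exact Finset.measurable_sum _ fun i _ =>
      (measurable_const.ite (hmeas i (measurableSet_singleton _)) measurable_const)
  have hint : Integrable (fun ω => ∑ i, X i ω) ℙ := by
    refine integrable_finsetSum _ fun i _ => .of_bound (hmeas i).aestronglyMeasurable 1 ?_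
    filter_upwards [hvals] with ω h
    rcases h i with h | h | h <;> norm_num [h]
  have hEven : {ω | ∃ m : ℤ, ∑ i, X i ω = m} =ᵐ[ℙ] {ω | Even (S ω)} := by
    filter_upwards [hvals] with ω h using propext (exists_int_sum_eq_iff_even h)
  have hOdd : {ω | ∃ m : ℤ, ∑ i, X i ω = m + 1/2} =ᵐ[ℙ] {ω | Odd (S ω)} := by
    filter_upwards [hvals] with ω h using propext (exists_int_sum_eq_add_half_iff_odd h)
  refine ⟨?_, ?_, ?_, ?_⟩
  · rw [measure_congr hEven, ← measureReal_def, measureReal_even_eq hS, ha]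
  · rw [setIntegral_congr_set hEven, setIntegral_even_eq hS hint, hμ, hb]
  · rw [measure_congr hOdd, ← measureReal_def, measureReal_odd_eq hS, ha]
  · rw [setIntegral_congr_set hOdd, setIntegral_odd_eq hS hint, hμ, hb]

/-- `P(X ∈ ℤ) = (1+a)/2`, `E[X·1_{X∈ℤ}] = (μ+b)/2`,
`P(X ∈ ℤ+1/2) = (1-a)/2`, and `E[X·1_{X∈ℤ+1/2}] = (μ-b)/2`. -/
theorem poisson_trinomial_parity_probabilities
    {Ω : Type*} [MeasureSpace Ω] [IsProbabilityMeasure (ℙ : Measure Ω)]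
    {n : ℕ} (X : Fin n → Ω → ℝ) (T W : Fin n → ℝ)
    (hmeas : ∀ i, Measurable (X i))
    (hindep : iIndepFun X ℙ)
    (hT0 : ∀ i, 0 ≤ T i) (hW0 : ∀ i, 0 ≤ W i) (hTW1 : ∀ i, T i + W i ≤ 1)
    (hT : ∀ i, (ℙ {ω | X i ω = 1/2}).toReal = T i)
    (hW : ∀ i, (ℙ {ω | X i ω = 1}).toReal = W i)
    (hL : ∀ i, (ℙ {ω | X i ω = 0}).toReal = 1 - T i - W i)
    (μ a b : ℝ)
    (hμ : μ = ∫ ω, ∑ i, X i ω ∂ℙ)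
    (ha : a = ∫ ω, (-1 : ℝ) ^ (univ.filter (fun i => X i ω = 1/2)).card ∂ℙ)
    (hb : b = ∫ ω, (∑ i, X i ω) *
        (-1 : ℝ) ^ (univ.filter (fun i => X i ω = 1/2)).card ∂ℙ) :
    (ℙ {ω | ∃ m : ℤ, (∑ i, X i ω) = (m : ℝ)}).toReal = (1 + a) / 2 ∧
    (∫ ω in {ω | ∃ m : ℤ, (∑ i, X i ω) = (m : ℝ)}, ∑ i, X i ω ∂ℙ) = (μ + b) / 2 ∧
    (ℙ {ω | ∃ m : ℤ, (∑ i, X i ω) = (m : ℝ) + 1/2}).toReal = (1 - a) / 2 ∧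
    (∫ ω in {ω | ∃ m : ℤ, (∑ i, X i ω) = (m : ℝ) + 1/2}, ∑ i, X i ω ∂ℙ)
      = (μ - b) / 2 :=
  poisson_trinomial_parity_probabilities_general X T W hmeas hT hW hL μ a b hμ ha hb
end

section
/- (Hermite–Biehler) Let f be a Hurwitz stable real polynomial with f(0) ≠ 0, and write f(w) = g(w²) + w·h(w²) for real polynomials g and h (the even and odd parts of f). Then all complex zeros of g and all complex zeros of h are real and non-positive. -/
/-!
If every root `r` of the real polynomial `f` has `Re r < 0` and `Re w > 0`, then
`‖conj w + r‖ < ‖w - r‖` for each root, so factoring `f` over `ℂ` and using `f(-w) = conj f(-conj w)`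
gives `‖f(-w)‖ < ‖f(w)‖` as soon as `f` is nonconstant. A point `z ∉ (-∞, 0]` has a square root
`w` with `Re w > 0`, and `f(±w) = g(z) ± w h(z)`; if `z` is a zero of `g` or of `h`, the two values
have the same norm, a contradiction.
-/

open Polynomial Complex ComplexConjugate

theorem Multiset.prod_map_lt_prod_map_of_nonneg {ι R : Type*} [CommMonoidWithZero R]
    [PartialOrder R] [ZeroLEOneClass R] [PosMulStrictMono R] [NeZero (1 : R)]
    {s : Multiset ι} (hs : s ≠ 0) (f g : ι → R) (hf : ∀ i ∈ s, 0 ≤ f i)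
    (hfg : ∀ i ∈ s, f i < g i) : (s.map f).prod < (s.map g).prod := by
  have hg : 0 < (s.map g).prod :=
    Multiset.prod_pos fun _ hx ↦ by
      obtain ⟨i, hi, rfl⟩ := Multiset.mem_map.1 hx
      exact (hf i hi).trans_lt (hfg i hi)
  by_cases hzero : ∃ i ∈ s, f i = 0
  · obtain ⟨i, hi, hfi⟩ := hzero
    rwa [Multiset.prod_eq_zero (Multiset.mem_map.2 ⟨i, hi, hfi⟩)]
  · push Not at hzero
    exact Multiset.prod_map_lt_prod_map hs f g
      (fun i hi ↦ (hf i hi).lt_of_ne (hzero i hi).symm) hfg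

theorem Complex.exists_sq_eq_re_pos_of_mem_slitPlane {z : ℂ} (hz : z ∈ slitPlane) :
    ∃ w : ℂ, w ^ 2 = z ∧ 0 < w.re := by
  obtain ⟨w, hw⟩ := IsAlgClosed.exists_pow_nat_eq z two_pos
  rcases lt_trichotomy w.re 0 with hneg | hzero | hpos
  · exact ⟨-w, by rw [neg_sq, hw], by simpa using hneg⟩
  · rw [mem_slitPlane_iff, ← hw] at hz
    simp [sq, hzero] at hz
    nlinarith [sq_nonneg w.im]
  · exact ⟨w, hw, hpos⟩

theorem Complex.norm_conj_add_lt_norm_sub {w r : ℂ} (hw : 0 < w.re) (hr : r.re < 0) :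
    ‖conj w + r‖ < ‖w - r‖ := by
  rw [← sq_lt_sq₀ (norm_nonneg _) (norm_nonneg _), ← normSq_eq_norm_sq, ← normSq_eq_norm_sq,
    normSq_apply, normSq_apply]
  simp only [add_re, add_im, sub_re, sub_im, conj_re, conj_im]
  nlinarith

theorem Polynomial.norm_aeval_neg_lt_norm_aeval {f : ℝ[X]} (hf : ∀ z ∈ f.aroots ℂ, z.re < 0)
    (hdeg : 0 < f.natDegree) {w : ℂ} (hw : 0 < w.re) : ‖aeval (-w) f‖ < ‖aeval w f‖ := by
  set F := f.map (algebraMap ℝ ℂ)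
  have hroots : F.roots ≠ 0 := by
    rw [← Multiset.card_pos, IsAlgClosed.card_roots_map_eq_natDegree_from_simpleRing]
    exact hdeg
  have hlc : 0 < ‖F.leadingCoeff‖ :=
    norm_pos_iff.2 (leadingCoeff_ne_zero.2 fun h0 ↦ hroots (by rw [h0, roots_zero]))
  have hnorm (x : ℂ) : ‖aeval x f‖ = ‖F.leadingCoeff‖ * (F.roots.map (‖x - ·‖)).prod := by
    rw [aeval_def, ← eval_map, (IsAlgClosed.splits F).eval_eq_prod_roots, norm_mul,
      ← normHom_apply, ← normHom_apply, map_multiset_prod, Multiset.map_map]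
    rfl
  calc ‖aeval (-w) f‖ = ‖aeval (-conj w) f‖ := by
        rw [← norm_conj, ← aeval_conj, map_neg]
    _ = ‖F.leadingCoeff‖ * (F.roots.map (‖conj w + ·‖)).prod := by
        rw [hnorm]
        congr 2
        refine Multiset.map_congr rfl fun r _ ↦ ?_
        rw [← norm_neg, neg_sub, sub_neg_eq_add, add_comm]
    _ < ‖F.leadingCoeff‖ * (F.roots.map (‖w - ·‖)).prod :=
        mul_lt_mul_of_pos_left (Multiset.prod_map_lt_prod_map_of_nonneg hroots _ _
          (fun _ _ ↦ norm_nonneg _) fun r hr ↦ norm_conj_add_lt_norm_sub hw (hf r hr)) hlc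
    _ = ‖aeval w f‖ := (hnorm w).symm

section EvenOddParts

variable {R : Type*} [CommSemiring R]

theorem Polynomial.coeff_comp_X_sq_add_X_mul_comp_X_sq_two_mul (g h : R[X]) (n : ℕ) :
    (g.comp (X ^ 2) + X * h.comp (X ^ 2)).coeff (2 * n) = g.coeff n := by
  cases n <;> simp [← expand_eq_comp_X_pow, coeff_expand two_pos, Nat.mul_succ, coeff_X_mul]

theorem Polynomial.coeff_comp_X_sq_add_X_mul_comp_X_sq_two_mul_add_one (g h : R[X]) (n : ℕ) :
    (g.comp (X ^ 2) + X * h.comp (X ^ 2)).coeff (2 * n + 1) = h.coeff n := by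
  simp [← expand_eq_comp_X_pow, coeff_expand two_pos, coeff_X_mul]

theorem Polynomial.aeval_comp_X_sq_add_X_mul_comp_X_sq {A : Type*} [CommSemiring A] [Algebra R A]
    (g h : R[X]) (x : A) :
    aeval x (g.comp (X ^ 2) + X * h.comp (X ^ 2)) = aeval (x ^ 2) g + x * aeval (x ^ 2) h := by
  simp [aeval_comp]

variable {f g h : R[X]}

theorem Polynomial.eq_C_and_eq_zero_of_natDegree_eq_zero
    (hdec : f = g.comp (X ^ 2) + X * h.comp (X ^ 2)) (hf : f.natDegree = 0) :
    g = C (f.coeff 0) ∧ h = 0 := by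
  constructor <;> ext n
  · rw [coeff_C, ← coeff_comp_X_sq_add_X_mul_comp_X_sq_two_mul g h, ← hdec]
    split_ifs with hn
    · rw [hn]
    · exact coeff_eq_zero_of_natDegree_lt (by omega)
  · rw [coeff_zero, ← coeff_comp_X_sq_add_X_mul_comp_X_sq_two_mul_add_one g h, ← hdec]
    exact coeff_eq_zero_of_natDegree_lt (by omega)

theorem Polynomial.norm_aeval_neg_eq_norm_aeval {A : Type*} [NormedCommRing A] [Algebra R A]
    (hdec : f = g.comp (X ^ 2) + X * h.comp (X ^ 2)) {w : A}
    (hw : aeval (w ^ 2) g = 0 ∨ aeval (w ^ 2) h = 0) : ‖aeval (-w) f‖ = ‖aeval w f‖ := by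
  rw [hdec, aeval_comp_X_sq_add_X_mul_comp_X_sq, aeval_comp_X_sq_add_X_mul_comp_X_sq, neg_sq]
  rcases hw with hg | hh
  · rw [hg, zero_add, zero_add, neg_mul, norm_neg]
  · rw [hh, mul_zero, mul_zero]

end EvenOddParts

theorem hermite_biehler_general (f g h : Polynomial ℝ)
    (hstable : ∀ z ∈ (f.map (algebraMap ℝ ℂ)).roots, z.re < 0)
    (hdec : f = g.comp (X ^ 2) + X * h.comp (X ^ 2)) :
    (∀ z ∈ (g.map (algebraMap ℝ ℂ)).roots, z.im = 0 ∧ z.re ≤ 0) ∧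
    (∀ z ∈ (h.map (algebraMap ℝ ℂ)).roots, z.im = 0 ∧ z.re ≤ 0) := by
  rcases Nat.eq_zero_or_pos f.natDegree with hconst | hdeg
  · obtain ⟨rfl, rfl⟩ := eq_C_and_eq_zero_of_natDegree_eq_zero hdec hconst
    -- `roots` of a constant, even of `0`, is empty
    simp
  have hroot (z : ℂ) (hz : aeval z g = 0 ∨ aeval z h = 0) : z.im = 0 ∧ z.re ≤ 0 := by
    by_contra hslit
    obtain ⟨w, rfl, hw⟩ := exists_sq_eq_re_pos_of_mem_slitPlane
      (mem_slitPlane_iff_not_le_zero.2 fun hz0 ↦ hslit (le_def.1 hz0).symm)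
    exact (norm_aeval_neg_lt_norm_aeval hstable hdeg hw).ne (norm_aeval_neg_eq_norm_aeval hdec hz)
  exact ⟨fun z hz ↦ hroot z (.inl (mem_aroots'.1 hz).2),
    fun z hz ↦ hroot z (.inr (mem_aroots'.1 hz).2)⟩

/-- Hermite–Biehler: if `f` is a Hurwitz stable real polynomial with
`f(0) ≠ 0` and `f(w) = g(w²) + w·h(w²)`, then all complex zeros of `g` and of `h`
are real and non-positive. -/
theorem hermite_biehler (f g h : Polynomial ℝ)
    (hstable : ∀ z ∈ (f.map (algebraMap ℝ ℂ)).roots, z.re < 0)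
    (hf0 : f.eval 0 ≠ 0)
    (hdec : f = g.comp (X ^ 2) + X * h.comp (X ^ 2)) :
    (∀ z ∈ (g.map (algebraMap ℝ ℂ)).roots, z.im = 0 ∧ z.re ≤ 0) ∧
    (∀ z ∈ (h.map (algebraMap ℝ ℂ)).roots, z.im = 0 ∧ z.re ≤ 0) :=
  hermite_biehler_general f g h hstable hdec
end

section
/- The two parity parts of the distribution of X are log-concave on their lattices: for every integer k, P(X = k)² ≥ P(X = k − 1)·P(X = k + 1), and for every half-integer k ∈ ℤ + 1/2, P(X = k)² ≥ P(X = k − 1)·P(X = k + 1). -/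
/-!
`2X` is integer valued and its law `c` is the convolution of the trinomials `(L_i, T_i, W_i)`
supported on `{0, 1, 2}`, so both claims read `c (m - 2) * c (m + 2) ≤ c m ^ 2`. This is carried
through the convolution by the stronger `TwoStepLogConcave`: each product inequality required of
`trinomialConv p q r c` expands into a nonnegative combination of the inequalities assumed of `c`.
-/

open MeasureTheory ProbabilityTheory

structure TwoStepLogConcave (c : ℤ → ℝ) : Prop where
  nonneg : ∀ m, 0 ≤ c m
  two_step : ∀ j k, j ≤ k → c j * c (k + 2) ≤ c (j + 2) * c k
  odd_gap : ∀ a b, a ≤ b → Odd (b - a) → c (a - 1) * c (b + 1) ≤ c a * c b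

def trinomialConv (p q r : ℝ) (c : ℤ → ℝ) (m : ℤ) : ℝ :=
  p * c m + q * c (m - 1) + r * c (m - 2)

namespace TwoStepLogConcave

variable {c : ℤ → ℝ} {p q r : ℝ}

theorem mul_le_sq (hc : TwoStepLogConcave c) (m : ℤ) : c (m - 2) * c (m + 2) ≤ c m ^ 2 := by
  simpa [sq] using hc.two_step (m - 2) m (by omega)

theorem single : TwoStepLogConcave (Pi.single 0 1) := by
  set δ : ℤ → ℝ := Pi.single 0 1
  have hnonneg : ∀ m, 0 ≤ δ m := fun m => by
    by_cases hm : m = 0 <;> simp [δ, hm]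
  have hne : ∀ i j, i ≠ j → δ i * δ j = 0 := fun i j hij => by
    by_cases hi : i = 0 <;> simp_all [δ, Pi.single_apply]
  refine ⟨hnonneg, fun j k hjk => ?_, fun a b hab _ => ?_⟩
  · rw [hne _ _ (by omega)]; exact mul_nonneg (hnonneg _) (hnonneg _)
  · rw [hne _ _ (by omega)]; exact mul_nonneg (hnonneg _) (hnonneg _)

theorem two_step_trinomialConv (hp : 0 ≤ p) (hq : 0 ≤ q) (hr : 0 ≤ r)
    (hc : TwoStepLogConcave c) {j k : ℤ} (hjk : j ≤ k) :
    trinomialConv p q r c j * trinomialConv p q r c (k + 2) ≤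
      trinomialConv p q r c (j + 2) * trinomialConv p q r c k := by
  obtain ⟨-, hF, hG⟩ := hc
  unfold trinomialConv
  obtain rfl | rfl | hk : k = j ∨ k = j + 1 ∨ j + 2 ≤ k := by omega
  · exact le_of_eq (by ring)
  · have h00 := hF j (j + 1) (by omega)
    have h11 := hF (j - 1) j (by omega)
    have h22 := hF (j - 2) (j - 1) (by omega)
    have h01 := hF (j - 1) (j + 1) (by omega)
    have h12 := hF (j - 2) j (by omega)
    -- the two `p * r` cross terms combine into an instance of `odd_gap`
    have h02 := hG (j - 1) (j + 2) (by omega) ⟨1, by ring⟩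
    ring_nf at h00 h11 h22 h01 h12 h02 ⊢
    linear_combination p * p * h00 + q * q * h11 + r * r * h22 + p * q * h01 + q * r * h12
      + p * r * h02
  · have h00 := hF j k (by omega)
    have h01 := hF j (k - 1) (by omega)
    have h02 := hF j (k - 2) (by omega)
    have h10 := hF (j - 1) k (by omega)
    have h11 := hF (j - 1) (k - 1) (by omega)
    have h12 := hF (j - 1) (k - 2) (by omega)
    have h20 := hF (j - 2) k (by omega)
    have h21 := hF (j - 2) (k - 1) (by omega)
    have h22 := hF (j - 2) (k - 2) (by omega)
    ring_nf at h00 h01 h02 h10 h11 h12 h20 h21 h22 ⊢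
    linear_combination p * p * h00 + p * q * h01 + p * r * h02 + q * p * h10 + q * q * h11
      + q * r * h12 + r * p * h20 + r * q * h21 + r * r * h22

theorem odd_gap_trinomialConv (hp : 0 ≤ p) (hq : 0 ≤ q) (hr : 0 ≤ r)
    (hc : TwoStepLogConcave c) {a b : ℤ} (hab : a ≤ b) (hodd : Odd (b - a)) :
    trinomialConv p q r c (a - 1) * trinomialConv p q r c (b + 1) ≤
      trinomialConv p q r c a * trinomialConv p q r c b := by
  obtain ⟨-, hF, hG⟩ := hc
  obtain ⟨m, hm⟩ := hodd
  unfold trinomialConv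
  obtain rfl | hb : b = a + 1 ∨ a + 3 ≤ b := by omega
  · have h00 := hG a (a + 1) (by omega) ⟨0, by ring⟩
    have h11 := hG (a - 1) a (by omega) ⟨0, by ring⟩
    have h22 := hG (a - 2) (a - 1) (by omega) ⟨0, by ring⟩
    have h01 := hF (a - 2) a (by omega)
    have h12 := hF (a - 3) (a - 1) (by omega)
    have h02 := hG (a - 2) (a + 1) (by omega) ⟨1, by ring⟩
    ring_nf at h00 h11 h22 h01 h12 h02 ⊢
    linear_combination p * p * h00 + q * q * h11 + r * r * h22 + p * q * h01 + q * r * h12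
      + p * r * h02
  · have h00 := hG a b (by omega) ⟨m, hm⟩
    have h11 := hG (a - 1) (b - 1) (by omega) ⟨m, by omega⟩
    have h22 := hG (a - 2) (b - 2) (by omega) ⟨m, by omega⟩
    have h01 := hF (a - 2) (b - 1) (by omega)
    have h12 := hF (a - 3) (b - 2) (by omega)
    have h02 := hG a (b - 2) (by omega) ⟨m - 1, by omega⟩
    have h20 := hG (a - 2) b (by omega) ⟨m + 1, by omega⟩
    ring_nf at h00 h11 h22 h01 h12 h02 h20 ⊢
    linear_combination p * p * h00 + q * q * h11 + r * r * h22 + p * q * h01 + q * r * h12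
      + p * r * h02 + p * r * h20

theorem trinomialConv (hp : 0 ≤ p) (hq : 0 ≤ q) (hr : 0 ≤ r) (hc : TwoStepLogConcave c) :
    TwoStepLogConcave (trinomialConv p q r c) :=
  ⟨fun _ => add_nonneg (add_nonneg (mul_nonneg hp (hc.nonneg _)) (mul_nonneg hq (hc.nonneg _)))
      (mul_nonneg hr (hc.nonneg _)),
    fun _ _ => two_step_trinomialConv hp hq hr hc,
    fun _ _ => odd_gap_trinomialConv hp hq hr hc⟩

end TwoStepLogConcave

section

variable {Ω : Type*} [MeasurableSpace Ω] {μ : Measure Ω}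

theorem ae_mem_of_sum_measureReal_eq_one_s12 [IsProbabilityMeasure μ] {β : Type*} [MeasurableSpace β]
    [MeasurableSingletonClass β] {Y : Ω → β} (hY : Measurable Y) (V : Finset β)
    (h : ∑ v ∈ V, μ.real (Y ⁻¹' {v}) = 1) : ∀ᵐ ω ∂μ, Y ω ∈ V := by
  rw [sum_measureReal_preimage_singleton V fun v _ => hY (measurableSet_singleton v),
    measureReal_def, ENNReal.toReal_eq_one_iff, ← prob_compl_eq_zero_iff (hY V.measurableSet)] at h
  exact ae_iff.mpr h

theorem measure_add_eq_sum_of_ae_mem {S Y : Ω → ℝ} (hY : Measurable Y) (hind : IndepFun S Y μ)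
    {V : Finset ℝ} (hV : ∀ᵐ ω ∂μ, Y ω ∈ V) (x : ℝ) :
    μ {ω | S ω + Y ω = x} = ∑ v ∈ V, μ {ω | S ω = x - v} * μ {ω | Y ω = v} := by
  set E := {ω | S ω + Y ω = x}
  have hfibres : ∑ v ∈ V, μ.restrict E (Y ⁻¹' {v}) = μ E := by
    rw [sum_measure_preimage_singleton V fun v _ => hY (measurableSet_singleton v),
      measure_congr (Filter.eventuallyEq_univ.mpr (ae_restrict_of_ae hV) :
        Y ⁻¹' V =ᵐ[μ.restrict E] Set.univ), Measure.restrict_apply_univ]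
  rw [← hfibres]
  refine Finset.sum_congr rfl fun v _ => ?_
  have hfibre : Y ⁻¹' {v} ∩ E = S ⁻¹' {x - v} ∩ Y ⁻¹' {v} := by
    ext ω
    simp only [E, Set.mem_inter_iff, Set.mem_preimage, Set.mem_singleton_iff, Set.mem_ofPred_eq]
    constructor <;> rintro ⟨h₁, h₂⟩ <;> constructor <;> linarith
  rw [Measure.restrict_apply (hY (measurableSet_singleton v)), hfibre,
    hind.measure_inter_preimage_eq_mul _ _ (measurableSet_singleton _) (measurableSet_singleton _)]
  rfl

theorem measureReal_add_eq_sum_of_ae_mem [IsFiniteMeasure μ] {S Y : Ω → ℝ} (hY : Measurable Y)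
    (hind : IndepFun S Y μ) {V : Finset ℝ} (hV : ∀ᵐ ω ∂μ, Y ω ∈ V) (x : ℝ) :
    μ.real {ω | S ω + Y ω = x} = ∑ v ∈ V, μ.real {ω | S ω = x - v} * μ.real {ω | Y ω = v} := by
  simp only [measureReal_def, measure_add_eq_sum_of_ae_mem hY hind hV x, ENNReal.toReal_mul,
    ENNReal.toReal_sum fun v _ => ENNReal.mul_ne_top (measure_ne_top μ _) (measure_ne_top μ _)]

theorem exists_twoStepLogConcave_measureReal_sum_eq [IsProbabilityMeasure μ] {ι : Type*}
    [DecidableEq ι] {X : ι → Ω → ℝ} (hmeas : ∀ i, Measurable (X i)) (hindep : iIndepFun X μ)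
    (hX : ∀ i, ∀ᵐ ω ∂μ, X i ω ∈ ({0, 1 / 2, 1} : Finset ℝ)) (s : Finset ι) :
    ∃ c, TwoStepLogConcave c ∧ ∀ m : ℤ, μ.real {ω | ∑ i ∈ s, X i ω = m / 2} = c m := by
  induction s using Finset.induction_on with
  | empty =>
    refine ⟨Pi.single 0 1, TwoStepLogConcave.single, fun m => ?_⟩
    rcases eq_or_ne m 0 with rfl | hm <;> simp [eq_comm (a := (0 : ℝ)), *]
  | @insert j s hj ih =>
    obtain ⟨c, hc, hcP⟩ := ih
    set p := fun v : ℝ => μ.real {ω | X j ω = v}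
    refine ⟨trinomialConv (p 0) (p (1 / 2)) (p 1) c,
      hc.trinomialConv measureReal_nonneg measureReal_nonneg measureReal_nonneg, fun m => ?_⟩
    have hind : IndepFun (∑ i ∈ s, X i) (X j) μ := hindep.indepFun_finsetSum_of_notMem hmeas hj
    have hshift : ∀ (d : ℤ) (v : ℝ), v = d / 2 →
        μ.real {ω | ∑ i ∈ s, X i ω = m / 2 - v} = c (m - d) := by
      rintro d v rfl
      rw [← hcP (m - d)]
      push_cast
      ring_nf
    have hsum := measureReal_add_eq_sum_of_ae_mem (hmeas j) hind (hX j) (m / 2)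
    simp only [Finset.sum_apply] at hsum
    rw [Finset.sum_insert (by norm_num), Finset.sum_insert (by norm_num), Finset.sum_singleton,
      hshift 0 0 (by simp), hshift 1 (1 / 2) (by simp), hshift 2 1 (by norm_num)] at hsum
    simp_rw [Finset.sum_insert hj, add_comm (X j _), hsum, trinomialConv, sub_zero]
    ring

end

theorem poisson_trinomial_parity_log_concave_general
    {Ω : Type*} [MeasureSpace Ω] [IsProbabilityMeasure (ℙ : Measure Ω)]
    {n : ℕ} (X : Fin n → Ω → ℝ) (T W : Fin n → ℝ)
    (hmeas : ∀ i, Measurable (X i))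
    (hindep : iIndepFun X ℙ)
    (hT : ∀ i, (ℙ {ω | X i ω = 1/2}).toReal = T i)
    (hW : ∀ i, (ℙ {ω | X i ω = 1}).toReal = W i)
    (hL : ∀ i, (ℙ {ω | X i ω = 0}).toReal = 1 - T i - W i) :
    (∀ k : ℤ, (ℙ {ω | (∑ i, X i ω) = (k : ℝ)}).toReal ^ 2 ≥
        (ℙ {ω | (∑ i, X i ω) = (k : ℝ) - 1}).toReal *
        (ℙ {ω | (∑ i, X i ω) = (k : ℝ) + 1}).toReal) ∧
    (∀ k : ℤ, (ℙ {ω | (∑ i, X i ω) = (k : ℝ) + 1/2}).toReal ^ 2 ≥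
        (ℙ {ω | (∑ i, X i ω) = (k : ℝ) + 1/2 - 1}).toReal *
        (ℙ {ω | (∑ i, X i ω) = (k : ℝ) + 1/2 + 1}).toReal) := by
  have hX : ∀ i, ∀ᵐ ω, X i ω ∈ ({0, 1 / 2, 1} : Finset ℝ) := fun i =>
    ae_mem_of_sum_measureReal_eq_one_s12 (hmeas i) _ <| by
      rw [Finset.sum_insert (by norm_num), Finset.sum_insert (by norm_num), Finset.sum_singleton]
      simp only [Set.preimage, Set.mem_singleton_iff, measureReal_def, hL, hT, hW]
      ring
  obtain ⟨c, hc, hcP⟩ := exists_twoStepLogConcave_measureReal_sum_eq hmeas hindep hX Finset.univ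
  have hP : ∀ (m : ℤ) (x : ℝ), x = m / 2 → (ℙ {ω | ∑ i, X i ω = x}).toReal = c m := by
    rintro m x rfl
    exact hcP m
  refine ⟨fun k => ?_, fun k => ?_⟩
  · rw [hP (2 * k) k (by push_cast; ring), hP (2 * k - 2) (k - 1) (by push_cast; ring),
      hP (2 * k + 2) (k + 1) (by push_cast; ring)]
    exact hc.mul_le_sq (2 * k)
  · rw [hP (2 * k + 1) (k + 1 / 2) (by push_cast; ring),
      hP (2 * k + 1 - 2) (k + 1 / 2 - 1) (by push_cast; ring),
      hP (2 * k + 1 + 2) (k + 1 / 2 + 1) (by push_cast; ring)]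
    exact hc.mul_le_sq (2 * k + 1)

/-- the two parity parts of the distribution of `X` are log-concave:
for every integer `k`, `P(X = k)² ≥ P(X = k-1)·P(X = k+1)`, and for every
half-integer `k + 1/2`, `P(X = k+1/2)² ≥ P(X = k-1/2)·P(X = k+3/2)`. -/
theorem poisson_trinomial_parity_log_concave
    {Ω : Type*} [MeasureSpace Ω] [IsProbabilityMeasure (ℙ : Measure Ω)]
    {n : ℕ} (X : Fin n → Ω → ℝ) (T W : Fin n → ℝ)
    (hmeas : ∀ i, Measurable (X i))
    (hindep : iIndepFun X ℙ)
    (hT0 : ∀ i, 0 ≤ T i) (hW0 : ∀ i, 0 ≤ W i) (hTW1 : ∀ i, T i + W i ≤ 1)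
    (hT : ∀ i, (ℙ {ω | X i ω = 1/2}).toReal = T i)
    (hW : ∀ i, (ℙ {ω | X i ω = 1}).toReal = W i)
    (hL : ∀ i, (ℙ {ω | X i ω = 0}).toReal = 1 - T i - W i)
    (hposZ : 0 < (ℙ {ω | ∃ m : ℤ, (∑ i, X i ω) = (m : ℝ)}).toReal)
    (hposH : 0 < (ℙ {ω | ∃ m : ℤ, (∑ i, X i ω) = (m : ℝ) + 1/2}).toReal) :
    (∀ k : ℤ, (ℙ {ω | (∑ i, X i ω) = (k : ℝ)}).toReal ^ 2 ≥
        (ℙ {ω | (∑ i, X i ω) = (k : ℝ) - 1}).toReal *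
        (ℙ {ω | (∑ i, X i ω) = (k : ℝ) + 1}).toReal) ∧
    (∀ k : ℤ, (ℙ {ω | (∑ i, X i ω) = (k : ℝ) + 1/2}).toReal ^ 2 ≥
        (ℙ {ω | (∑ i, X i ω) = (k : ℝ) + 1/2 - 1}).toReal *
        (ℙ {ω | (∑ i, X i ω) = (k : ℝ) + 1/2 + 1}).toReal) :=
  poisson_trinomial_parity_log_concave_general X T W hmeas hindep hT hW hL
end

section
/- If L_i, T_i, W_i > 0 for all i, then both conditional distributions are Poisson binomial: there exist q_1,…,q_n ∈ [0,1] and r_1,…,r_{n−1} ∈ [0,1] such that, as polynomials in z, ∑_{k=0}^n P(X = k)·z^k = P(X ∈ ℤ)·∏_{j=1}^n (1 − q_j + q_j·z) and ∑_{k=0}^{n−1} P(X = k + 1/2)·z^k = P(X ∈ ℤ + 1/2)·∏_{j=1}^{n−1} (1 − r_j + r_j·z). -/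
/-!
Let `F(s) = ∏ᵢ (Lᵢ + Tᵢ s + Wᵢ s²)`. By independence `P(X = M/2)` is the `M`-th coefficient
of `F`, so the two generating polynomials of the statement are the even and odd parts `A`, `B` of
`F(s) = A(s²) + s B(s²)`, while `P(X ∈ ℤ) = A(1)` and `P(X ∈ ℤ + 1/2) = B(1)`.

For `Re s > 0` each factor satisfies `|f(-s)| < |f(s)|`, hence `|F(-s)| < |F(s)|`. If `s²` is a
root of `A` or of `B`, then `F(-s) = ∓F(s)`, so `Re s = 0` and the root `s² = -(Im s)²` is real
and nonpositive. A real polynomial all of whose roots `x_j` are real and nonpositive factors as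
`A(z) = A(1) ∏ (1 - q_j + q_j z)` with `q_j = 1 / (1 - x_j) ∈ (0, 1]`.
-/

open MeasureTheory ProbabilityTheory Finset Polynomial
open scoped Classical

theorem Finset.prod_lt_prod_of_nonempty_of_nonneg {ι : Type*} {s : Finset ι} {f g : ι → ℝ}
    (hf : ∀ i ∈ s, 0 ≤ f i) (hfg : ∀ i ∈ s, f i < g i) (hs : s.Nonempty) :
    ∏ i ∈ s, f i < ∏ i ∈ s, g i := by
  induction hs using Finset.Nonempty.cons_induction with
  | singleton a => simpa using hfg a (mem_singleton_self a)
  | cons a s ha hs ih =>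
    simp only [prod_cons, forall_mem_cons] at *
    exact mul_lt_mul'' hfg.1 (ih hf.2 hfg.2) hf.1 (prod_nonneg hf.2)

theorem Finset.sum_filter_range_mod_two_eq {M : Type*} [AddCommMonoid M] (g : ℕ → M)
    (c : ℕ) {r : ℕ} (hr : r < 2) :
    ∑ N ∈ range (2 * c + 1) with N % 2 = r, g N = ∑ k ∈ range (c + 1 - r), g (2 * k + r) := by
  have : {N ∈ range (2 * c + 1) | N % 2 = r} = (range (c + 1 - r)).image (2 * · + r) := by
    ext N
    simp only [mem_filter, mem_range, mem_image]
    constructor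
    · rintro ⟨hN, hNr⟩
      exact ⟨N / 2, by omega, by omega⟩
    · rintro ⟨k, hk, rfl⟩
      omega
  rw [this, sum_image fun a _ b _ h => by simpa using h]

theorem Polynomial.eval_eq_sum_range_of_coeff_eq_zero {R : Type*} [Semiring R] {p : R[X]}
    {n : ℕ} (hp : ∀ k ≥ n, p.coeff k = 0) (x : R) :
    p.eval x = ∑ k ∈ range n, p.coeff k * x ^ k := by
  rcases eq_or_ne p 0 with rfl | hp0
  · simp
  · exact eval_eq_sum_range' (lt_of_not_ge fun h => leadingCoeff_ne_zero.2 hp0 (hp _ h)) x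

theorem Polynomial.expand_contract_add_X_mul_expand_contract_divX {R : Type*} [CommSemiring R]
    (f : R[X]) : expand R 2 (contract 2 f) + X * expand R 2 (contract 2 f.divX) = f := by
  ext n
  obtain ⟨k, rfl | rfl⟩ := Nat.even_or_odd' n
  · rcases k with _ | k
    · simp [coeff_expand, coeff_contract]
    · rw [show 2 * (k + 1) = 2 * k + 1 + 1 by ring]
      simp [coeff_expand, coeff_contract, Nat.dvd_iff_mod_eq_zero, Nat.add_mod]
      congr 1; omega
  · simp [coeff_expand, coeff_contract, Nat.dvd_iff_mod_eq_zero, Nat.add_mod]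
    congr 1; omega

theorem Polynomial.aeval_eq_aeval_contract_add_mul_aeval_contract_divX {R A : Type*}
    [CommSemiring R] [CommSemiring A] [Algebra R A] (f : R[X]) (s : A) :
    aeval s f = aeval (s ^ 2) (contract 2 f) + s * aeval (s ^ 2) (contract 2 f.divX) := by
  conv_lhs => rw [← expand_contract_add_X_mul_expand_contract_divX f]
  simp [expand_aeval]

def Polynomial.HasOnlyNonposRealRoots (A : ℝ[X]) : Prop :=
  ∀ z ∈ A.aroots ℂ, ∃ x : ℝ, x ≤ 0 ∧ z = x

theorem Polynomial.HasOnlyNonposRealRoots.of_mul_left {A B : ℝ[X]}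
    (h : (B * A).HasOnlyNonposRealRoots) (hB : B ≠ 0) : A.HasOnlyNonposRealRoots := by
  intro z hz
  obtain ⟨hA, hAz⟩ := mem_aroots.1 hz
  exact h z (mem_aroots.2 ⟨mul_ne_zero hB hA, by rw [map_mul, hAz, mul_zero]⟩)

theorem Polynomial.HasOnlyNonposRealRoots.exists_eval_eq_eval_one_mul_prod {A : ℝ[X]}
    (hA : A.HasOnlyNonposRealRoots) {m : ℕ} (hdeg : A.natDegree ≤ m) :
    ∃ q : Fin m → ℝ, (∀ j, q j ∈ Set.Icc (0 : ℝ) 1) ∧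
      ∀ z, A.eval z = A.eval 1 * ∏ j, (1 - q j + q j * z) := by
  induction m generalizing A with
  | zero =>
    refine ⟨Fin.elim0, fun j => j.elim0, fun z => ?_⟩
    rw [eq_C_of_natDegree_eq_zero (Nat.le_zero.1 hdeg)]
    simp
  | succ m ih =>
    by_cases hA0 : A.natDegree = 0
    · obtain ⟨q, hq, hAq⟩ := ih hA (by omega)
      refine ⟨Fin.cons 0 q, Fin.cons (by simp) hq, fun z => ?_⟩
      simp [Fin.prod_univ_succ, hAq z]
    obtain ⟨z, hz⟩ := IsAlgClosed.exists_aeval_eq_zero ℂ A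
      fun h => hA0 (natDegree_eq_of_degree_eq_some h)
    obtain ⟨x, hx, rfl⟩ := hA z (mem_aroots.2 ⟨fun h => hA0 (by simp [h]), hz⟩)
    have hfactor : (X - C x) * (A /ₘ (X - C x)) = A :=
      mul_divByMonic_eq_iff_isRoot.2 (Complex.ofReal_eq_zero.1 ((ofReal_eval A x).trans hz))
    obtain ⟨q, hq, hAq⟩ := ih (A := A /ₘ (X - C x))
      (hfactor.symm ▸ hA |>.of_mul_left (X_sub_C_ne_zero x))
      (by rw [natDegree_divByMonic _ (monic_X_sub_C x), natDegree_X_sub_C]; omega)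
    have h1x : 0 < 1 - x := by linarith
    refine ⟨Fin.cons (1 - x)⁻¹ q,
      Fin.cons ⟨inv_nonneg.2 h1x.le, inv_le_one_of_one_le₀ (by linarith)⟩ hq, fun z => ?_⟩
    rw [← hfactor, eval_mul, eval_mul, hAq z, Fin.prod_univ_succ]
    simp only [Fin.cons_zero, Fin.cons_succ, eval_sub, eval_X, eval_C]
    field_simp
    ring

theorem norm_quadratic_neg_lt {a b c : ℝ} (ha : 0 < a) (hb : 0 < b) (hc : 0 ≤ c) {s : ℂ}
    (hs : 0 < s.re) : ‖(a : ℂ) + b * -s + c * (-s) ^ 2‖ < ‖(a : ℂ) + b * s + c * s ^ 2‖ := by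
  rw [Complex.norm_def, Complex.norm_def]
  refine Real.sqrt_lt_sqrt (Complex.normSq_nonneg _) ?_
  simp only [Complex.normSq_apply, Complex.add_re, Complex.add_im, Complex.mul_re,
    Complex.mul_im, Complex.ofReal_re, Complex.ofReal_im, Complex.neg_re, Complex.neg_im, sq]
  -- the difference of the two sides is `4 b (Re s) (a + c |s|²)`
  nlinarith [mul_pos (mul_pos hb hs) (add_pos_of_pos_of_nonneg ha
    (mul_nonneg hc (add_nonneg (sq_nonneg s.re) (sq_nonneg s.im))))]

theorem exists_nonpos_sq_eq_of_norm_aeval_neg_eq {F : ℝ[X]}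
    (hF : ∀ s : ℂ, 0 < s.re → ‖aeval (-s) F‖ < ‖aeval s F‖) {s : ℂ}
    (h : ‖aeval (-s) F‖ = ‖aeval s F‖) : ∃ x : ℝ, x ≤ 0 ∧ s ^ 2 = x := by
  have hre : s.re = 0 := by
    rcases lt_trichotomy s.re 0 with hs | hs | hs
    · have := hF (-s) (by simpa using hs)
      rw [neg_neg] at this
      linarith
    · exact hs
    · linarith [hF s hs]
  exact ⟨-s.im ^ 2, by nlinarith, by apply Complex.ext <;> simp [sq, hre]⟩

theorem hasOnlyNonposRealRoots_contract_and_contract_divX {F : ℝ[X]}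
    (hF : ∀ s : ℂ, 0 < s.re → ‖aeval (-s) F‖ < ‖aeval s F‖) :
    (contract 2 F).HasOnlyNonposRealRoots ∧ (contract 2 F.divX).HasOnlyNonposRealRoots := by
  constructor <;>
  · intro z hz
    obtain ⟨s, rfl⟩ := IsAlgClosed.exists_pow_nat_eq z two_pos
    refine exists_nonpos_sq_eq_of_norm_aeval_neg_eq hF ?_
    rw [aeval_eq_aeval_contract_add_mul_aeval_contract_divX F s,
      aeval_eq_aeval_contract_add_mul_aeval_contract_divX F (-s), neg_sq, (mem_aroots.1 hz).2]
    simp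

noncomputable def trinomialProd {ι R : Type*} [Fintype ι] [CommSemiring R] (p : ι → Fin 3 → R) :
    R[X] :=
  ∏ i, ∑ c, C (p i c) * X ^ (c : ℕ)

section trinomialProd

variable {ι : Type*} [Fintype ι]

theorem coeff_trinomialProd {R : Type*} [CommSemiring R] (p : ι → Fin 3 → R) (M : ℕ) :
    (trinomialProd p).coeff M = ∑ v : ι → Fin 3 with ∑ i, (v i : ℕ) = M, ∏ i, p i (v i) := by
  rw [trinomialProd, prod_univ_sum, Fintype.piFinset_univ, finsetSum_coeff, sum_filter]
  refine sum_congr rfl fun v _ => ?_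
  rw [prod_mul_distrib, ← map_prod, prod_pow_eq_pow_sum, coeff_C_mul, coeff_X_pow]
  split_ifs <;> simp_all [eq_comm]

theorem sum_val_le_two_mul_card (v : ι → Fin 3) : ∑ i, (v i : ℕ) ≤ 2 * Fintype.card ι :=
  calc ∑ i, (v i : ℕ) ≤ ∑ _i : ι, 2 := sum_le_sum fun i _ => Nat.lt_succ_iff.1 (v i).isLt
    _ = 2 * Fintype.card ι := by simp [mul_comm]

theorem natDegree_trinomialProd_le {R : Type*} [CommSemiring R] (p : ι → Fin 3 → R) :
    (trinomialProd p).natDegree ≤ 2 * Fintype.card ι := by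
  rw [natDegree_le_iff_coeff_eq_zero]
  intro M hM
  rw [coeff_trinomialProd]
  exact sum_eq_zero fun v hv =>
    absurd (mem_filter.1 hv).2 ((sum_val_le_two_mul_card v).trans_lt hM).ne

theorem aeval_trinomialProd {R A : Type*} [CommSemiring R] [CommSemiring A] [Algebra R A]
    (p : ι → Fin 3 → R) (s : A) :
    aeval s (trinomialProd p) = ∏ i, (algebraMap R A (p i 0) + algebraMap R A (p i 1) * s
      + algebraMap R A (p i 2) * s ^ 2) := by
  simp [trinomialProd, Fin.sum_univ_three]

theorem norm_aeval_trinomialProd_neg_lt [Nonempty ι] {p : ι → Fin 3 → ℝ}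
    (hp0 : ∀ i, 0 < p i 0) (hp1 : ∀ i, 0 < p i 1) (hp2 : ∀ i, 0 ≤ p i 2) {s : ℂ}
    (hs : 0 < s.re) : ‖aeval (-s) (trinomialProd p)‖ < ‖aeval s (trinomialProd p)‖ := by
  simp only [aeval_trinomialProd, norm_prod, Complex.coe_algebraMap]
  exact prod_lt_prod_of_nonempty_of_nonneg (fun _ _ => norm_nonneg _)
    (fun i _ => norm_quadratic_neg_lt (hp0 i) (hp1 i) (hp2 i) hs) univ_nonempty

end trinomialProd

theorem hasOnlyNonposRealRoots_contract_trinomialProd {ι : Type*} [Fintype ι]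
    {p : ι → Fin 3 → ℝ} (hp0 : ∀ i, 0 < p i 0) (hp1 : ∀ i, 0 < p i 1) (hp2 : ∀ i, 0 ≤ p i 2) :
    (contract 2 (trinomialProd p)).HasOnlyNonposRealRoots ∧
      (contract 2 (trinomialProd p).divX).HasOnlyNonposRealRoots := by
  cases isEmpty_or_nonempty ι
  · have : trinomialProd p = C 1 := by simp [trinomialProd]
    rw [this, divX_C, ← C_0, contract_C, contract_C]
    simp [HasOnlyNonposRealRoots]
  · exact hasOnlyNonposRealRoots_contract_and_contract_divX fun s hs =>
      norm_aeval_trinomialProd_neg_lt hp0 hp1 hp2 hs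

theorem ProbabilityTheory.iIndepFun.measureReal_setOf_eq_sum_prod {Ω ι κ β : Type*}
    [MeasurableSpace Ω] {μ : Measure Ω} [IsFiniteMeasure μ] [Fintype ι] [Fintype κ]
    [MeasurableSpace β] [MeasurableSingletonClass β] {X : ι → Ω → β} {val : κ → β}
    (hval : Function.Injective val) (hmeas : ∀ i, Measurable (X i)) (hindep : iIndepFun X μ)
    (hX : ∀ i, ∀ᵐ ω ∂μ, X i ω ∈ Set.range val) (P : (ι → β) → Prop) :
    μ.real {ω | P (fun i => X i ω)} =
      ∑ v : ι → κ with P (val ∘ v), ∏ i, μ.real {ω | X i ω = val (v i)} := by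
  have hae : {ω | P (fun i => X i ω)} =ᵐ[μ]
      ⋃ v ∈ ({v | P (val ∘ v)} : Finset (ι → κ)), {ω | ∀ i, X i ω = val (v i)} := by
    refine Filter.eventuallyEq_set.2 ?_
    filter_upwards [ae_all_iff.2 hX] with ω hω
    choose v hv using hω
    have hXv : (fun i => X i ω) = val ∘ v := funext fun i => (hv i).symm
    simp only [Set.mem_ofPred_eq, Set.mem_iUnion, mem_filter, mem_univ, true_and, exists_prop]
    constructor
    · exact fun h => ⟨v, hXv ▸ h, fun i => (hv i).symm⟩
    · rintro ⟨w, hw, hXw⟩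
      rwa [show (fun i => X i ω) = val ∘ w from funext hXw]
  rw [measureReal_congr hae, measureReal_biUnion_finset]
  · refine sum_congr rfl fun v _ => ?_
    have hprod : μ (⋂ i, X i ⁻¹' {val (v i)}) = ∏ i, μ (X i ⁻¹' {val (v i)}) :=
      hindep.meas_iInter fun i => ⟨_, measurableSet_singleton _, rfl⟩
    rw [Set.ofPred_forall, measureReal_def]
    exact (congrArg ENNReal.toReal hprod).trans (ENNReal.toReal_prod _ _)
  · intro v _ w _ hvw
    obtain ⟨i, hi⟩ := Function.ne_iff.1 hvw
    refine Set.disjoint_left.2 fun ω hv hw => hi (hval ?_)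
    exact (hv i).symm.trans (hw i)
  · intro v _
    rw [Set.ofPred_forall]
    exact MeasurableSet.iInter fun i => hmeas i (measurableSet_singleton _)

theorem ae_mem_range_of_sum_measureReal_eq_one {Ω κ β : Type*} [MeasurableSpace Ω]
    {μ : Measure Ω} [IsProbabilityMeasure μ] [Fintype κ] [MeasurableSpace β]
    [MeasurableSingletonClass β]
    {Y : Ω → β} (hY : Measurable Y) {val : κ → β} (hval : Function.Injective val)
    (h : ∑ c, μ.real {ω | Y ω = val c} = 1) : ∀ᵐ ω ∂μ, Y ω ∈ Set.range val := by
  have hmeas : MeasurableSet (Y ⁻¹' Set.range val) := hY (Set.finite_range val).measurableSet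
  have : μ.real (Y ⁻¹' Set.range val) = 1 := by
    rw [← h, ← Set.image_univ, ← coe_univ, ← coe_image,
      ← sum_measureReal_preimage_singleton _ fun b _ => hY (measurableSet_singleton b),
      sum_image fun a _ b _ hab => hval hab]
    rfl
  rw [measureReal_def, ENNReal.toReal_eq_one_iff] at this
  exact (prob_compl_eq_zero_iff hmeas).2 this

theorem Fin.injective_natCast_val_div_two {n : ℕ} :
    Function.Injective fun c : Fin n => ((c : ℕ) : ℝ) / 2 := by
  intro c d h
  simpa [Fin.val_inj] using h

theorem exists_intCast_eq_natCast_div_two_iff (M : ℕ) :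
    (∃ m : ℤ, (M : ℝ) / 2 = m) ↔ M % 2 = 0 := by
  constructor
  · rintro ⟨m, hm⟩
    have : (M : ℤ) = 2 * m := by
      have : (M : ℝ) = 2 * m := by linarith
      exact_mod_cast this
    omega
  · intro hM
    obtain ⟨k, rfl⟩ : ∃ k, M = 2 * k := ⟨M / 2, by omega⟩
    exact ⟨k, by push_cast; ring⟩

theorem exists_intCast_add_half_eq_natCast_div_two_iff (M : ℕ) :
    (∃ m : ℤ, (M : ℝ) / 2 = m + 1 / 2) ↔ M % 2 = 1 := by
  constructor
  · rintro ⟨m, hm⟩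
    have : (M : ℤ) = 2 * m + 1 := by
      have : (M : ℝ) = 2 * m + 1 := by linarith
      exact_mod_cast this
    omega
  · intro hM
    obtain ⟨k, rfl⟩ : ∃ k, M = 2 * k + 1 := ⟨M / 2, by omega⟩
    exact ⟨k, by push_cast; ring⟩

section HalfIntegerValued

variable {Ω ι : Type*} [MeasurableSpace Ω] {μ : Measure Ω} [Fintype ι] {X : ι → Ω → ℝ}

noncomputable def pgfTwiceSum (μ : Measure Ω) (X : ι → Ω → ℝ) : ℝ[X] :=
  trinomialProd fun i (c : Fin 3) => μ.real {ω | X i ω = ((c : ℕ) : ℝ) / 2}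

theorem coeff_pgfTwiceSum_eq_zero {M : ℕ} (hM : 2 * Fintype.card ι < M) :
    (pgfTwiceSum μ X).coeff M = 0 :=
  coeff_eq_zero_of_natDegree_lt ((natDegree_trinomialProd_le _).trans_lt hM)

theorem coeff_contract_pgfTwiceSum_eq_zero {k : ℕ} (hk : Fintype.card ι < k) :
    (contract 2 (pgfTwiceSum μ X)).coeff k = 0 := by
  rw [coeff_contract two_ne_zero]
  exact coeff_pgfTwiceSum_eq_zero (by omega)

theorem coeff_contract_divX_pgfTwiceSum_eq_zero {k : ℕ} (hk : Fintype.card ι ≤ k) :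
    (contract 2 (pgfTwiceSum μ X).divX).coeff k = 0 := by
  rw [coeff_contract two_ne_zero, coeff_divX]
  exact coeff_pgfTwiceSum_eq_zero (by omega)

theorem natDegree_contract_pgfTwiceSum_le :
    (contract 2 (pgfTwiceSum μ X)).natDegree ≤ Fintype.card ι :=
  natDegree_le_iff_coeff_eq_zero.2 fun _ hk => coeff_contract_pgfTwiceSum_eq_zero hk

theorem natDegree_contract_divX_pgfTwiceSum_le :
    (contract 2 (pgfTwiceSum μ X).divX).natDegree ≤ Fintype.card ι - 1 :=
  natDegree_le_iff_coeff_eq_zero.2 fun _ hk => coeff_contract_divX_pgfTwiceSum_eq_zero (by omega)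

variable [IsProbabilityMeasure μ] (hmeas : ∀ i, Measurable (X i)) (hindep : iIndepFun X μ)
  (hX : ∀ i, ∀ᵐ ω ∂μ, X i ω ∈ Set.range fun c : Fin 3 => ((c : ℕ) : ℝ) / 2)
include hmeas hindep hX

theorem measureReal_sum_eq_sum_coeff_pgfTwiceSum (Q : ℝ → Prop) :
    μ.real {ω | Q (∑ i, X i ω)} =
      ∑ M ∈ range (2 * Fintype.card ι + 1) with Q (((M : ℕ) : ℝ) / 2),
        (pgfTwiceSum μ X).coeff M := by
  rw [hindep.measureReal_setOf_eq_sum_prod Fin.injective_natCast_val_div_two hmeas hX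
    fun x => Q (∑ i, x i)]
  simp only [pgfTwiceSum, coeff_trinomialProd, Function.comp_apply, ← sum_div, ← Nat.cast_sum]
  rw [← sum_fiberwise_of_maps_to (g := fun v : ι → Fin 3 => ∑ i, (v i : ℕ))
    (t := {M ∈ range (2 * Fintype.card ι + 1) | Q (((M : ℕ) : ℝ) / 2)})
    fun v hv => mem_filter.2 ⟨mem_range.2 (Nat.lt_succ_of_le (sum_val_le_two_mul_card v)),
      (mem_filter.1 hv).2⟩]
  refine sum_congr rfl fun M hM => ?_
  rw [filter_filter]
  refine sum_congr (filter_congr fun v _ => ?_) fun _ _ => rfl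
  constructor
  · exact And.right
  · rintro rfl
    exact ⟨(mem_filter.1 hM).2, rfl⟩

theorem measureReal_sum_eq_natCast_div_two {N : ℕ} (hN : N ≤ 2 * Fintype.card ι) :
    μ.real {ω | ∑ i, X i ω = (N : ℝ) / 2} = (pgfTwiceSum μ X).coeff N := by
  rw [measureReal_sum_eq_sum_coeff_pgfTwiceSum hmeas hindep hX (· = (N : ℝ) / 2),
    filter_congr fun M _ => by rw [div_left_inj' two_ne_zero, Nat.cast_inj],
    filter_eq', if_pos (mem_range.2 (Nat.lt_succ_of_le hN)), sum_singleton]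

theorem sum_measureReal_sum_eq_natCast_mul_pow (z : ℝ) :
    ∑ k ∈ range (Fintype.card ι + 1), μ.real {ω | ∑ i, X i ω = k} * z ^ k =
      (contract 2 (pgfTwiceSum μ X)).eval z := by
  rw [eval_eq_sum_range_of_coeff_eq_zero fun k hk => coeff_contract_pgfTwiceSum_eq_zero hk]
  refine sum_congr rfl fun k hk => ?_
  rw [show (k : ℝ) = ((2 * k : ℕ) : ℝ) / 2 by push_cast; ring,
    measureReal_sum_eq_natCast_div_two hmeas hindep hX (by simp at hk; omega),
    coeff_contract two_ne_zero, mul_comm k]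

theorem sum_measureReal_sum_eq_natCast_add_half_mul_pow (z : ℝ) :
    ∑ k ∈ range (Fintype.card ι), μ.real {ω | ∑ i, X i ω = k + 1 / 2} * z ^ k =
      (contract 2 (pgfTwiceSum μ X).divX).eval z := by
  rw [eval_eq_sum_range_of_coeff_eq_zero fun k hk => coeff_contract_divX_pgfTwiceSum_eq_zero hk]
  refine sum_congr rfl fun k hk => ?_
  rw [show (k : ℝ) + 1 / 2 = ((2 * k + 1 : ℕ) : ℝ) / 2 by push_cast; ring,
    measureReal_sum_eq_natCast_div_two hmeas hindep hX (by simp at hk; omega),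
    coeff_contract two_ne_zero, coeff_divX, mul_comm k]

theorem measureReal_sum_mem_int :
    μ.real {ω | ∃ m : ℤ, ∑ i, X i ω = m} = (contract 2 (pgfTwiceSum μ X)).eval 1 := by
  rw [measureReal_sum_eq_sum_coeff_pgfTwiceSum hmeas hindep hX fun x => ∃ m : ℤ, x = m,
    filter_congr fun M _ => exists_intCast_eq_natCast_div_two_iff M,
    sum_filter_range_mod_two_eq _ _ two_pos, Nat.sub_zero,
    eval_eq_sum_range_of_coeff_eq_zero fun k hk => coeff_contract_pgfTwiceSum_eq_zero hk]
  exact sum_congr rfl fun k _ => by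
    rw [coeff_contract two_ne_zero, one_pow, mul_one, add_zero, mul_comm]

theorem measureReal_sum_mem_int_add_half :
    μ.real {ω | ∃ m : ℤ, ∑ i, X i ω = m + 1 / 2} =
      (contract 2 (pgfTwiceSum μ X).divX).eval 1 := by
  rw [measureReal_sum_eq_sum_coeff_pgfTwiceSum hmeas hindep hX fun x => ∃ m : ℤ, x = m + 1 / 2,
    filter_congr fun M _ => exists_intCast_add_half_eq_natCast_div_two_iff M,
    sum_filter_range_mod_two_eq _ _ one_lt_two,
    eval_eq_sum_range_of_coeff_eq_zero fun k hk => coeff_contract_divX_pgfTwiceSum_eq_zero hk]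
  exact sum_congr rfl fun k _ => by
    rw [coeff_contract two_ne_zero, coeff_divX, one_pow, mul_one, mul_comm]

end HalfIntegerValued

theorem poisson_trinomial_conditional_poisson_binomial_general
    {Ω : Type*} [MeasureSpace Ω] [IsProbabilityMeasure (ℙ : Measure Ω)]
    {n : ℕ} (X : Fin n → Ω → ℝ) (T W : Fin n → ℝ)
    (hmeas : ∀ i, Measurable (X i))
    (hindep : iIndepFun X ℙ)
    (hTpos : ∀ i, 0 < T i) (hLpos : ∀ i, 0 < 1 - T i - W i)
    (hT : ∀ i, (ℙ {ω | X i ω = 1/2}).toReal = T i)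
    (hW : ∀ i, (ℙ {ω | X i ω = 1}).toReal = W i)
    (hL : ∀ i, (ℙ {ω | X i ω = 0}).toReal = 1 - T i - W i) :
    ∃ (q : Fin n → ℝ) (r : Fin (n - 1) → ℝ),
      (∀ j, q j ∈ Set.Icc (0 : ℝ) 1) ∧ (∀ j, r j ∈ Set.Icc (0 : ℝ) 1) ∧
      (∀ z : ℝ, ∑ k ∈ Finset.range (n + 1),
          (ℙ {ω | (∑ i, X i ω) = (k : ℝ)}).toReal * z ^ k =
        (ℙ {ω | ∃ m : ℤ, (∑ i, X i ω) = (m : ℝ)}).toReal *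
          ∏ j, (1 - q j + q j * z)) ∧
      (∀ z : ℝ, ∑ k ∈ Finset.range n,
          (ℙ {ω | (∑ i, X i ω) = (k : ℝ) + 1/2}).toReal * z ^ k =
        (ℙ {ω | ∃ m : ℤ, (∑ i, X i ω) = (m : ℝ) + 1/2}).toReal *
          ∏ j, (1 - r j + r j * z)) := by
  simp only [← measureReal_def] at *
  have hp0 : ∀ i, (ℙ : Measure Ω).real {ω | X i ω = (((0 : Fin 3) : ℕ) : ℝ) / 2} = 1 - T i - W i :=
    by simpa using hL
  have hp1 : ∀ i, (ℙ : Measure Ω).real {ω | X i ω = (((1 : Fin 3) : ℕ) : ℝ) / 2} = T i := by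
    simpa using hT
  have hp2 : ∀ i, (ℙ : Measure Ω).real {ω | X i ω = (((2 : Fin 3) : ℕ) : ℝ) / 2} = W i := by
    simpa using hW
  have hX : ∀ i, ∀ᵐ ω, X i ω ∈ Set.range fun c : Fin 3 => ((c : ℕ) : ℝ) / 2 := fun i =>
    ae_mem_range_of_sum_measureReal_eq_one (hmeas i) Fin.injective_natCast_val_div_two
      (by rw [Fin.sum_univ_three, hp0, hp1, hp2]; ring)
  obtain ⟨hA, hB⟩ := hasOnlyNonposRealRoots_contract_trinomialProd
    (p := fun i (c : Fin 3) => (ℙ : Measure Ω).real {ω | X i ω = ((c : ℕ) : ℝ) / 2})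
    (fun i => (hp0 i).symm ▸ hLpos i) (fun i => (hp1 i).symm ▸ hTpos i)
    fun _ => measureReal_nonneg
  obtain ⟨q, hq, hqA⟩ := hA.exists_eval_eq_eval_one_mul_prod
    (natDegree_contract_pgfTwiceSum_le.trans_eq (Fintype.card_fin n))
  obtain ⟨r, hr, hrB⟩ := hB.exists_eval_eq_eval_one_mul_prod
    (natDegree_contract_divX_pgfTwiceSum_le.trans_eq (by rw [Fintype.card_fin]))
  refine ⟨q, r, hq, hr, fun z => ?_, fun z => ?_⟩
  · have := sum_measureReal_sum_eq_natCast_mul_pow hmeas hindep hX z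
    rw [Fintype.card_fin] at this
    rw [this, measureReal_sum_mem_int hmeas hindep hX]
    exact hqA z
  · have := sum_measureReal_sum_eq_natCast_add_half_mul_pow hmeas hindep hX z
    rw [Fintype.card_fin] at this
    rw [this, measureReal_sum_mem_int_add_half hmeas hindep hX]
    exact hrB z

/-- if `L_i, T_i, W_i > 0` for all `i`, then the two conditional
distributions are Poisson binomial: their (unnormalized) generating polynomials
factor as `P(X ∈ ℤ)·∏_j (1 - q_j + q_j z)` and
`P(X ∈ ℤ+1/2)·∏_j (1 - r_j + r_j z)` with `q_j, r_j ∈ [0,1]`. -/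
theorem poisson_trinomial_conditional_poisson_binomial
    {Ω : Type*} [MeasureSpace Ω] [IsProbabilityMeasure (ℙ : Measure Ω)]
    {n : ℕ} (X : Fin n → Ω → ℝ) (T W : Fin n → ℝ)
    (hmeas : ∀ i, Measurable (X i))
    (hindep : iIndepFun X ℙ)
    (hTpos : ∀ i, 0 < T i) (hWpos : ∀ i, 0 < W i) (hLpos : ∀ i, 0 < 1 - T i - W i)
    (hT : ∀ i, (ℙ {ω | X i ω = 1/2}).toReal = T i)
    (hW : ∀ i, (ℙ {ω | X i ω = 1}).toReal = W i)
    (hL : ∀ i, (ℙ {ω | X i ω = 0}).toReal = 1 - T i - W i) :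
    ∃ (q : Fin n → ℝ) (r : Fin (n - 1) → ℝ),
      (∀ j, q j ∈ Set.Icc (0 : ℝ) 1) ∧ (∀ j, r j ∈ Set.Icc (0 : ℝ) 1) ∧
      (∀ z : ℝ, ∑ k ∈ Finset.range (n + 1),
          (ℙ {ω | (∑ i, X i ω) = (k : ℝ)}).toReal * z ^ k =
        (ℙ {ω | ∃ m : ℤ, (∑ i, X i ω) = (m : ℝ)}).toReal *
          ∏ j, (1 - q j + q j * z)) ∧
      (∀ z : ℝ, ∑ k ∈ Finset.range n,
          (ℙ {ω | (∑ i, X i ω) = (k : ℝ) + 1/2}).toReal * z ^ k =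
        (ℙ {ω | ∃ m : ℤ, (∑ i, X i ω) = (m : ℝ) + 1/2}).toReal *
          ∏ j, (1 - r j + r j * z)) :=
  poisson_trinomial_conditional_poisson_binomial_general X T W hmeas hindep hTpos hLpos hT hW hL
end

section
/- (Darroch) Let B = B_1 + ⋯ + B_m be a sum of independent Bernoulli random variables with mean μ_B = E[B]. Then the distribution of B has either a unique mode or two adjacent (consecutive integer) modes, and any mode m_B (an integer maximizing k ↦ P(B = k)) satisfies |m_B − μ_B| < 1. -/
/-!
The law of `∑ j ∈ s, B j` is the Poisson binomial distribution `a = pmf p s`, read off the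
coefficients of `∏ (1 - p j + p j X)` in `ℝ[ℤ]`; it satisfies `a (k - 1) a (l + 1) ≤ a k a l`
for `k ≤ l`. With `c j` the law after removing trial `j` and `μ = ∑ p j`, size-biasing gives
`(k + 1 - μ) a (k + 1) = ∑ j, p j (1 - p j) (c j k - c j (k + 1))`.
If `a (m + 1) ≤ a m` and `μ ≥ m + 1`, the left side is `≤ 0` at `k = m`, while log-concavity
of `c j` makes every summand `≥ 0`. So all summands vanish, which forces `c j (m - 1) ≥ c j m`,
and the identity at `k = m - 1` then equates the negative number `(m - μ) a m` with a
nonnegative one. Replacing `p` by `1 - p` reflects the distribution and gives `m - 1 < μ`.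
Two modes are then less than `2` apart.
-/

open MeasureTheory ProbabilityTheory Finset
open scoped Classical

namespace PoissonBinomial

open AddMonoidAlgebra

variable {ι : Type*} (p : ι → ℝ)

noncomputable def genFun (s : Finset ι) : AddMonoidAlgebra ℝ ℤ :=
  ∏ i ∈ s, (single 0 (1 - p i) + single 1 (p i))

noncomputable def pmf (s : Finset ι) : ℤ →₀ ℝ := (genFun p s).coeff

variable {p}

lemma pmf_empty (k : ℤ) : pmf p ∅ k = if k = 0 then 1 else 0 := by
  rw [pmf, genFun, prod_empty, one_def, coeff_single, Finsupp.single_apply]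
  simp only [eq_comm]

lemma pmf_insert {i : ι} {s : Finset ι} (hi : i ∉ s) (k : ℤ) :
    pmf p (insert i s) k = (1 - p i) * pmf p s k + p i * pmf p s (k - 1) := by
  rw [pmf, genFun, prod_insert hi, add_mul, coeff_add, Finsupp.add_apply, coeff_single_mul_apply,
    coeff_single_mul_apply, neg_zero, zero_add, neg_add_eq_sub]
  rfl

lemma pmf_erase {i : ι} {s : Finset ι} (hi : i ∈ s) (k : ℤ) :
    pmf p s k = (1 - p i) * pmf p (s.erase i) k + p i * pmf p (s.erase i) (k - 1) := by
  rw [← pmf_insert (notMem_erase i s), insert_erase hi]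

lemma sum_pmf (s : Finset ι) : (pmf p s).sum (fun _ r => r) = 1 := by
  have h : lift ℝ ℝ ℤ 1 (genFun p s) = 1 := by
    rw [genFun, map_prod]
    refine prod_eq_one fun i _ => ?_
    rw [map_add, lift_single, lift_single]
    simp
  simpa [lift_apply, pmf] using h

lemma pmf_one_sub (s : Finset ι) (k : ℤ) :
    pmf (fun i => 1 - p i) s k = pmf p s (#s - k) := by
  induction s using Finset.induction_on generalizing k with
  | empty => simp only [pmf_empty, card_empty, Nat.cast_zero, zero_sub, neg_eq_zero]
  | insert i s hi ih =>
    rw [pmf_insert hi, pmf_insert hi, ih, ih, card_insert_of_notMem hi]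
    push_cast
    ring_nf

lemma pmf_nonneg (hp : ∀ i, p i ∈ Set.Icc 0 1) (s : Finset ι) (k : ℤ) : 0 ≤ pmf p s k := by
  induction s using Finset.induction_on generalizing k with
  | empty => rw [pmf_empty]; split_ifs <;> norm_num
  | insert i s hi ih =>
    obtain ⟨h0, h1⟩ := hp i
    rw [pmf_insert hi]
    have := ih k
    have := ih (k - 1)
    have : 0 ≤ 1 - p i := by linarith
    positivity

/-- Log-concavity in the form that survives `pmf_insert`: for `k = l` alone the induction
breaks, since `a (k - 1) a (k + 1) ≤ a k ^ 2` does not rule out internal zeros. -/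
lemma pmf_mul_le_mul (hp : ∀ i, p i ∈ Set.Icc 0 1) (s : Finset ι) {k l : ℤ} (hkl : k ≤ l) :
    pmf p s (k - 1) * pmf p s (l + 1) ≤ pmf p s k * pmf p s l := by
  induction s using Finset.induction_on generalizing k l with
  | empty =>
    simp only [pmf_empty]
    split_ifs <;> first | omega | norm_num
  | insert i s hi ih =>
    obtain ⟨h0, h1⟩ := hp i
    set c := pmf p s
    have hkl' := ih hkl
    have hkl'' : c (k - 2) * c l ≤ c (k - 1) * c (l - 1) := by
      simpa [sub_sub, one_add_one_eq_two] using ih (k := k - 1) (l := l - 1) (by omega)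
    have hcross : c (k - 2) * c (l + 1) ≤ c k * c (l - 1) := by
      have h := ih (k := k - 1) (l := l) (by omega)
      rw [sub_sub, one_add_one_eq_two] at h
      rcases hkl.lt_or_eq with hlt | rfl
      · exact h.trans (by simpa using ih (k := k) (l := l - 1) (by omega))
      · linarith
    simp only [pmf_insert hi, add_sub_cancel_right, sub_sub, one_add_one_eq_two]
    nlinarith [mul_nonneg (mul_self_nonneg (1 - p i)) (sub_nonneg.2 hkl'),
      mul_nonneg (mul_nonneg h0 (sub_nonneg.2 h1)) (sub_nonneg.2 hcross),
      mul_nonneg (mul_self_nonneg (p i)) (sub_nonneg.2 hkl'')]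

lemma succ_mul_pmf_succ (s : Finset ι) (k : ℤ) :
    ((k : ℝ) + 1) * pmf p s (k + 1) = ∑ i ∈ s, p i * pmf p (s.erase i) k := by
  induction s using Finset.induction_on generalizing k with
  | empty =>
    rw [pmf_empty, sum_empty]
    split_ifs with hk
    · rw [show k = -1 by omega]; norm_num
    · rw [mul_zero]
  | insert a s ha ih =>
    have herase : ∀ i ∈ s, pmf p ((insert a s).erase i) k
        = (1 - p a) * pmf p (s.erase i) k + p a * pmf p (s.erase i) (k - 1) := fun i hi => by
      rw [erase_insert_of_ne (ne_of_mem_of_not_mem hi ha).symm,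
        pmf_insert (fun h => ha (mem_of_mem_erase h))]
    have ih' := ih (k - 1)
    push_cast at ih'
    rw [sub_add_cancel, sub_add_cancel] at ih'
    rw [sum_insert ha, erase_insert ha, sum_congr rfl fun i hi => by rw [herase i hi],
      pmf_insert ha, add_sub_cancel_right]
    simp only [mul_add, sum_add_distrib, mul_left_comm (p _) (1 - p a), mul_left_comm (p _) (p a),
      ← mul_sum]
    rw [← ih k, ← ih']
    ring

lemma sub_sum_mul_pmf_succ (s : Finset ι) (k : ℤ) :
    ((k : ℝ) + 1 - ∑ i ∈ s, p i) * pmf p s (k + 1)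
      = ∑ i ∈ s, p i * (1 - p i) * (pmf p (s.erase i) k - pmf p (s.erase i) (k + 1)) := by
  have hmean : (∑ i ∈ s, p i) * pmf p s (k + 1) = ∑ i ∈ s, p i *
      ((1 - p i) * pmf p (s.erase i) (k + 1) + p i * pmf p (s.erase i) k) := by
    rw [sum_mul]
    refine sum_congr rfl fun i hi => ?_
    rw [pmf_erase hi, add_sub_cancel_right]
  rw [sub_mul, succ_mul_pmf_succ, hmean, ← sum_sub_distrib]
  refine sum_congr rfl fun i _ => ?_
  ring

lemma mul_sub_succ_nonneg_of_mix_le {q : ℝ} {c : ℤ → ℝ} {m : ℤ} (hq : q ∈ Set.Icc 0 1)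
    (hc : 0 ≤ c m) (hlc : c (m - 1) * c (m + 1) ≤ c m ^ 2)
    (hle : (1 - q) * c (m + 1) + q * c m ≤ (1 - q) * c m + q * c (m - 1)) :
    0 ≤ q * (1 - q) * (c m - c (m + 1)) := by
  obtain ⟨h0, h1⟩ := hq
  rcases h0.eq_or_lt with rfl | h0
  · simp
  rcases h1.eq_or_lt with rfl | h1
  · simp
  refine mul_nonneg (by nlinarith) (by_contra fun hdec => ?_)
  have hinc : c m < c (m - 1) := by nlinarith
  nlinarith

lemma mul_sub_nonneg_of_mix_le_of_eq {q : ℝ} {c : ℤ → ℝ} {m : ℤ} (hq : q ∈ Set.Icc 0 1)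
    (hle : (1 - q) * c (m + 1) + q * c m ≤ (1 - q) * c m + q * c (m - 1))
    (heq : q * (1 - q) * (c m - c (m + 1)) = 0) :
    0 ≤ q * (1 - q) * (c (m - 1) - c m) := by
  obtain ⟨h0, h1⟩ := hq
  rcases mul_eq_zero.1 heq with hw | hflat
  · simp [hw]
  rcases h0.eq_or_lt with rfl | h0
  · simp
  have hflat : c (m + 1) = c m := by linarith
  rw [hflat] at hle
  have hinc : c m ≤ c (m - 1) := le_of_mul_le_mul_left (by linarith) h0
  exact mul_nonneg (mul_nonneg h0.le (by linarith)) (by linarith)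

theorem sum_lt_of_pmf_succ_le (hp : ∀ i, p i ∈ Set.Icc 0 1) {s : Finset ι} {m : ℤ}
    (hpos : 0 < pmf p s m) (hle : pmf p s (m + 1) ≤ pmf p s m) :
    ∑ i ∈ s, p i < m + 1 := by
  by_contra! hμ
  set c := fun i => pmf p (s.erase i)
  have hmix : ∀ i ∈ s,
      (1 - p i) * c i (m + 1) + p i * c i m ≤ (1 - p i) * c i m + p i * c i (m - 1) := by
    intro i hi
    simpa only [c, pmf_erase hi, add_sub_cancel_right] using hle
  have hnonneg : ∀ i ∈ s, 0 ≤ p i * (1 - p i) * (c i m - c i (m + 1)) := fun i hi =>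
    mul_sub_succ_nonneg_of_mix_le (hp i) (pmf_nonneg hp _ _)
      (by simpa [sq] using pmf_mul_le_mul hp (s.erase i) le_rfl) (hmix i hi)
  have hzero : ∀ i ∈ s, p i * (1 - p i) * (c i m - c i (m + 1)) = 0 := by
    have hle0 : ∑ i ∈ s, p i * (1 - p i) * (c i m - c i (m + 1)) ≤ 0 := by
      rw [← sub_sum_mul_pmf_succ]
      exact mul_nonpos_of_nonpos_of_nonneg (by linarith) (pmf_nonneg hp _ _)
    exact (sum_eq_zero_iff_of_nonneg hnonneg).1 (le_antisymm hle0 (sum_nonneg hnonneg))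
  have hneg : ∑ i ∈ s, p i * (1 - p i) * (c i (m - 1) - c i m) < 0 := by
    have h := sub_sum_mul_pmf_succ (p := p) s (m - 1)
    push_cast at h
    rw [sub_add_cancel, sub_add_cancel] at h
    rw [← h]
    exact mul_neg_of_neg_of_pos (by linarith) hpos
  have := sum_nonneg fun i hi => mul_sub_nonneg_of_mix_le_of_eq (hp i) (hmix i hi) (hzero i hi)
  linarith

theorem sub_one_lt_sum_of_pmf_pred_le (hp : ∀ i, p i ∈ Set.Icc 0 1) {s : Finset ι} {m : ℤ}
    (hpos : 0 < pmf p s m) (hle : pmf p s (m - 1) ≤ pmf p s m) :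
    (m : ℝ) - 1 < ∑ i ∈ s, p i := by
  have hq : ∀ i, 1 - p i ∈ Set.Icc 0 1 := fun i =>
    ⟨by linarith [(hp i).2], by linarith [(hp i).1]⟩
  have hm : #s - (#s - m) = m := by ring
  have h := sum_lt_of_pmf_succ_le hq (m := #s - m) (by rwa [pmf_one_sub, hm])
    (by rwa [pmf_one_sub, pmf_one_sub, hm, show (#s : ℤ) - (#s - m + 1) = m - 1 by ring])
  rw [sum_sub_distrib, sum_const, nsmul_one] at h
  push_cast at h
  linarith

lemma pmf_pos_of_forall_le {s : Finset ι} {m : ℤ} (hm : ∀ k, pmf p s k ≤ pmf p s m) :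
    0 < pmf p s m := by
  by_contra! h
  have := sum_pmf (p := p) s
  rw [Finsupp.sum] at this
  linarith [sum_nonpos fun k (_ : k ∈ (pmf p s).support) => (hm k).trans h]

theorem exists_forall_pmf_le (hp : ∀ i, p i ∈ Set.Icc 0 1) (s : Finset ι) :
    ∃ m, ∀ k, pmf p s k ≤ pmf p s m := by
  have hne : (pmf p s).support.Nonempty := by
    by_contra! h
    simpa [Finsupp.sum, h] using sum_pmf (p := p) s
  obtain ⟨m, -, hm⟩ := exists_max_image _ (pmf p s) hne
  refine ⟨m, fun k => ?_⟩
  by_cases hk : k ∈ (pmf p s).support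
  · exact hm k hk
  · rw [Finsupp.notMem_support_iff.1 hk]
    exact pmf_nonneg hp s m

theorem abs_sub_sum_lt_one (hp : ∀ i, p i ∈ Set.Icc 0 1) {s : Finset ι} {m : ℤ}
    (hm : ∀ k, pmf p s k ≤ pmf p s m) : |(m : ℝ) - ∑ i ∈ s, p i| < 1 := by
  have hpos := pmf_pos_of_forall_le hm
  rw [abs_sub_lt_iff]
  constructor
  · linarith [sub_one_lt_sum_of_pmf_pred_le hp hpos (hm _)]
  · linarith [sum_lt_of_pmf_succ_le hp hpos (hm _)]

end PoissonBinomial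

section Bernoulli

variable {Ω ι : Type*} [MeasurableSpace Ω] {μ : Measure Ω} [IsProbabilityMeasure μ]
  {B : ι → Ω → ℝ} {p : ι → ℝ}

lemma ae_eq_zero_or_eq_one {X : Ω → ℝ} {q : ℝ} (hX : Measurable X)
    (h1 : μ.real {ω | X ω = 1} = q) (h0 : μ.real {ω | X ω = 0} = 1 - q) :
    ∀ᵐ ω ∂μ, X ω = 0 ∨ X ω = 1 := by
  have hmeas : MeasurableSet {ω | X ω = 0 ∨ X ω = 1} :=
    (measurableSet_eq_fun hX measurable_const).union (measurableSet_eq_fun hX measurable_const)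
  have hdisj : Disjoint {ω | X ω = 0} {ω | X ω = 1} :=
    Set.disjoint_left.2 fun ω h0 h1 => by simp_all
  have hone : μ.real {ω | X ω = 0 ∨ X ω = 1} = 1 := by
    rw [Set.ofPred_or, measureReal_union hdisj (measurableSet_eq_fun hX measurable_const), h0, h1]
    ring
  exact mem_ae_iff.2 ((prob_compl_eq_zero_iff hmeas).2 ((ENNReal.toReal_eq_one_iff _).1 hone))

lemma ae_eq_indicator_one {X : Ω → ℝ} {q : ℝ} (hX : Measurable X)
    (h1 : μ.real {ω | X ω = 1} = q) (h0 : μ.real {ω | X ω = 0} = 1 - q) :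
    X =ᵐ[μ] {ω | X ω = 1}.indicator 1 := by
  filter_upwards [ae_eq_zero_or_eq_one hX h1 h0] with ω hω
  rcases hω with h | h <;> simp [Set.indicator, h]

theorem integral_sum_eq_sum (hmeas : ∀ j, Measurable (B j))
    (h1 : ∀ j, μ.real {ω | B j ω = 1} = p j) (h0 : ∀ j, μ.real {ω | B j ω = 0} = 1 - p j)
    (s : Finset ι) : ∫ ω, ∑ j ∈ s, B j ω ∂μ = ∑ j ∈ s, p j := by
  have hae := fun j => ae_eq_indicator_one (hmeas j) (h1 j) (h0 j)
  have hset : ∀ j, MeasurableSet {ω | B j ω = 1} := fun j =>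
    measurableSet_eq_fun (hmeas j) measurable_const
  rw [integral_finsetSum s fun j _ =>
    ((integrable_const 1).indicator (hset j)).congr (hae j).symm]
  refine sum_congr rfl fun j _ => ?_
  rw [integral_congr_ae (hae j), integral_indicator_one (hset j), h1]

theorem measureReal_sum_eq_pmf (hmeas : ∀ j, Measurable (B j)) (hindep : iIndepFun B μ)
    (h1 : ∀ j, μ.real {ω | B j ω = 1} = p j) (h0 : ∀ j, μ.real {ω | B j ω = 0} = 1 - p j)
    (s : Finset ι) (k : ℤ) :
    μ.real {ω | ∑ j ∈ s, B j ω = k} = PoissonBinomial.pmf p s k := by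
  induction s using Finset.induction_on generalizing k with
  | empty =>
    by_cases hk : k = 0 <;> simp [hk, PoissonBinomial.pmf_empty, eq_comm]
  | insert a s ha ih =>
    set S : Ω → ℝ := fun ω => ∑ j ∈ s, B j ω
    have hS : Measurable S := Finset.measurable_sum s fun j _ => hmeas j
    have hind : S ⟂ᵢ[μ] B a := by
      convert hindep.indepFun_finsetSum_of_notMem hmeas ha using 1
      ext ω
      simp [S]
    have hsplit : ({ω | ∑ j ∈ insert a s, B j ω = k} : Set Ω) =ᵐ[μ]
        ({ω | S ω = k ∧ B a ω = 0} ∪ {ω | S ω = ((k - 1 : ℤ) : ℝ) ∧ B a ω = 1} : Set Ω) := by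
      filter_upwards [ae_eq_zero_or_eq_one (hmeas a) (h1 a) (h0 a)] with ω hω
      apply propext
      show (_ = _) ↔ _ ∨ _
      rcases hω with h | h <;> simp [h, S, sum_insert ha, eq_sub_iff_add_eq']
    have hdisj : Disjoint {ω | S ω = k ∧ B a ω = 0} {ω | S ω = ((k - 1 : ℤ) : ℝ) ∧ B a ω = 1} :=
      Set.disjoint_left.2 fun ω h h' => by simp_all
    have hprod : ∀ x y : ℝ, μ.real {ω | S ω = x ∧ B a ω = y}
        = μ.real {ω | S ω = x} * μ.real {ω | B a ω = y} := fun x y => by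
      rw [measureReal_def, measureReal_def, measureReal_def, ← ENNReal.toReal_mul]
      exact congrArg ENNReal.toReal (hind.measure_inter_preimage_eq_mul _ _
        (measurableSet_singleton x) (measurableSet_singleton y))
    rw [measureReal_congr hsplit, measureReal_union hdisj
      ((hS (measurableSet_singleton _)).inter (hmeas a (measurableSet_singleton _))), hprod, hprod,
      ih, ih, h0, h1, PoissonBinomial.pmf_insert ha]
    ring

end Bernoulli

open PoissonBinomial

theorem darroch_mode_mean_general
    {Ω : Type*} [MeasureSpace Ω] [IsProbabilityMeasure (ℙ : Measure Ω)]
    {m : ℕ} (B : Fin m → Ω → ℝ) (p : Fin m → ℝ)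
    (hmeas : ∀ j, Measurable (B j))
    (hindep : iIndepFun B ℙ)
    (h1 : ∀ j, (ℙ {ω | B j ω = 1}).toReal = p j)
    (h0 : ∀ j, (ℙ {ω | B j ω = 0}).toReal = 1 - p j)
    (μB : ℝ) (hμB : μB = ∫ ω, ∑ j, B j ω ∂ℙ) :
    (∃ mB : ℤ, ∀ k : ℤ,
        ℙ {ω | (∑ j, B j ω) = (k : ℝ)} ≤ ℙ {ω | (∑ j, B j ω) = (mB : ℝ)}) ∧
    (∀ m₁ m₂ : ℤ,
        (∀ k : ℤ, ℙ {ω | (∑ j, B j ω) = (k : ℝ)} ≤ ℙ {ω | (∑ j, B j ω) = (m₁ : ℝ)}) →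
        (∀ k : ℤ, ℙ {ω | (∑ j, B j ω) = (k : ℝ)} ≤ ℙ {ω | (∑ j, B j ω) = (m₂ : ℝ)}) →
        |m₁ - m₂| ≤ 1) ∧
    (∀ mB : ℤ,
        (∀ k : ℤ, ℙ {ω | (∑ j, B j ω) = (k : ℝ)} ≤ ℙ {ω | (∑ j, B j ω) = (mB : ℝ)}) →
        |(mB : ℝ) - μB| < 1) := by
  have hp : ∀ j, p j ∈ Set.Icc 0 1 := fun j =>
    ⟨h1 j ▸ ENNReal.toReal_nonneg, sub_nonneg.1 (h0 j ▸ ENNReal.toReal_nonneg)⟩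
  have hlaw : ∀ k : ℤ, ℙ {ω | ∑ j, B j ω = k} = ENNReal.ofReal (pmf p univ k) := fun k => by
    rw [← measureReal_sum_eq_pmf hmeas hindep h1 h0, ofReal_measureReal]
  have hmode : ∀ n : ℤ, (∀ k : ℤ, ℙ {ω | ∑ j, B j ω = k} ≤ ℙ {ω | ∑ j, B j ω = n}) ↔
      ∀ k, pmf p univ k ≤ pmf p univ n := fun n => by
    simp only [hlaw, ENNReal.ofReal_le_ofReal_iff (pmf_nonneg hp _ _)]
  have hclose : ∀ n : ℤ, (∀ k : ℤ, ℙ {ω | ∑ j, B j ω = k} ≤ ℙ {ω | ∑ j, B j ω = n}) →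
      |(n : ℝ) - μB| < 1 := fun n hn => by
    rw [hμB, integral_sum_eq_sum hmeas h1 h0]
    exact abs_sub_sum_lt_one hp ((hmode n).1 hn)
  refine ⟨?_, fun m₁ m₂ hm₁ hm₂ => ?_, hclose⟩
  · obtain ⟨n, hn⟩ := exists_forall_pmf_le hp univ
    exact ⟨n, (hmode n).2 hn⟩
  · have hlt : ((|m₁ - m₂| : ℤ) : ℝ) < 2 := by
      push_cast
      linarith [abs_sub_le (m₁ : ℝ) μB m₂, abs_sub_comm (m₂ : ℝ) μB, hclose m₁ hm₁, hclose m₂ hm₂]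
    have : |m₁ - m₂| < 2 := by exact_mod_cast hlt
    omega

/-- Darroch: a sum `B` of independent Bernoulli random variables has a
mode, any two modes are adjacent, and any mode `m_B` satisfies `|m_B - μ_B| < 1`. -/
theorem darroch_mode_mean
    {Ω : Type*} [MeasureSpace Ω] [IsProbabilityMeasure (ℙ : Measure Ω)]
    {m : ℕ} (B : Fin m → Ω → ℝ) (p : Fin m → ℝ)
    (hmeas : ∀ j, Measurable (B j))
    (hindep : iIndepFun B ℙ)
    (hp0 : ∀ j, 0 ≤ p j) (hp1 : ∀ j, p j ≤ 1)
    (h1 : ∀ j, (ℙ {ω | B j ω = 1}).toReal = p j)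
    (h0 : ∀ j, (ℙ {ω | B j ω = 0}).toReal = 1 - p j)
    (μB : ℝ) (hμB : μB = ∫ ω, ∑ j, B j ω ∂ℙ) :
    (∃ mB : ℤ, ∀ k : ℤ,
        ℙ {ω | (∑ j, B j ω) = (k : ℝ)} ≤ ℙ {ω | (∑ j, B j ω) = (mB : ℝ)}) ∧
    (∀ m₁ m₂ : ℤ,
        (∀ k : ℤ, ℙ {ω | (∑ j, B j ω) = (k : ℝ)} ≤ ℙ {ω | (∑ j, B j ω) = (m₁ : ℝ)}) →
        (∀ k : ℤ, ℙ {ω | (∑ j, B j ω) = (k : ℝ)} ≤ ℙ {ω | (∑ j, B j ω) = (m₂ : ℝ)}) →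
        |m₁ - m₂| ≤ 1) ∧
    (∀ mB : ℤ,
        (∀ k : ℤ, ℙ {ω | (∑ j, B j ω) = (k : ℝ)} ≤ ℙ {ω | (∑ j, B j ω) = (mB : ℝ)}) →
        |(mB : ℝ) - μB| < 1) :=
  darroch_mode_mean_general B p hmeas hindep h1 h0 μB hμB
end

section
/- Suppose P(X ∈ ℤ) = 0 or P(X ∈ ℤ + 1/2) = 0. Then T_i ∈ {0, 1} for every i = 1,…,n, and if k is the number of indices i with T_i = 0, then for every real t, P(X = (n − k)/2 + t) = P(∑_{i : T_i = 0} X_i = t); that is, the distribution of X is the Poisson binomial distribution of the k trials with T_i = 0 (with success probabilities W_i) shifted to the right by (n − k)/2. -/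
open MeasureTheory ProbabilityTheory Finset
open scoped Classical Pointwise

/-!
Each `X i` lives a.s. on `{0, 1/2, 1} ⊆ ℤ ∪ (ℤ + 1/2)`, and the two cosets add like `ℤ/2ℤ`.
If some `X i` charged both cosets, then, whichever coset the independent sum of the other
variables charges, adding `X i` would charge both `ℤ` and `ℤ + 1/2`, against the hypothesis.
So every `P(X i = 1/2)` is `0` or `1`, and the variables with `P(X i = 1/2) = 1` are a.s.
constant: they only shift the sum by `1/2` each.
-/

section

variable {Ω β : Type*} {mΩ : MeasurableSpace Ω} {μ : Measure Ω}

theorem ProbabilityTheory.IndepFun.measure_preimage_mul_le_measure_add_mem [Add β]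
    {mβ : MeasurableSpace β} {Y Z : Ω → β} (hYZ : IndepFun Y Z μ) {s t u : Set β}
    (hs : MeasurableSet s) (ht : MeasurableSet t) (hstu : s + t ⊆ u) :
    μ (Y ⁻¹' s) * μ (Z ⁻¹' t) ≤ μ {ω | Y ω + Z ω ∈ u} := by
  rw [← hYZ.measure_inter_preimage_eq_mul s t hs ht]
  exact measure_mono fun ω hω => hstu (Set.add_mem_add hω.1 hω.2)

theorem ae_mem_of_sum_measure_preimage_singleton_eq_one [IsProbabilityMeasure μ]
    {mβ : MeasurableSpace β} [MeasurableSingletonClass β] {f : Ω → β} (hf : Measurable f)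
    {s : Finset β} (hs : ∑ b ∈ s, (μ (f ⁻¹' {b})).toReal = 1) : ∀ᵐ ω ∂μ, f ω ∈ s := by
  refine (mem_ae_iff_prob_eq_one (hf s.measurableSet)).2 ?_
  rwa [← sum_measure_preimage_singleton s fun b _ => hf (measurableSet_singleton b),
    ← ENNReal.toReal_eq_one_iff, ENNReal.toReal_sum fun b _ => measure_ne_top μ _]

theorem measure_sum_eq_add_eq_of_ae_eq_const {ι : Type*} [Fintype ι] {X : ι → Ω → ℝ}
    {s : Finset ι} {c : ℝ} (hc : ∀ i ∉ s, ∀ᵐ ω ∂μ, X i ω = c) (t : ℝ) :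
    μ {ω | ∑ i, X i ω = (Fintype.card ι - #s) * c + t} = μ {ω | ∑ i ∈ s, X i ω = t} := by
  have hsplit : ∀ᵐ ω ∂μ, ∑ i, X i ω = (Fintype.card ι - #s) * c + ∑ i ∈ s, X i ω := by
    filter_upwards [(Filter.eventually_all_finset sᶜ).2 fun i hi => hc i (mem_compl.1 hi)]
      with ω hω
    rw [← sum_add_sum_compl s, sum_congr rfl hω, sum_const, card_compl, nsmul_eq_mul,
      Nat.cast_sub (card_le_univ s)]
    ring
  refine measure_congr ?_
  filter_upwards [hsplit] with ω hω
  change (_ = _) = (_ = _)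
  rw [hω, add_right_inj]

end

namespace PoissonTrinomial

variable {Ω : Type*} {mΩ : MeasurableSpace Ω} {μ : Measure Ω}

def ints : Set ℝ := {x | ∃ m : ℤ, x = m}

def intsAddHalf : Set ℝ := {x | ∃ m : ℤ, x = m + 1/2}

theorem measurableSet_ints : MeasurableSet ints :=
  ((Set.countable_range ((↑) : ℤ → ℝ)).mono <| by
    rintro _ ⟨m, rfl⟩; exact ⟨m, rfl⟩).measurableSet

theorem measurableSet_intsAddHalf : MeasurableSet intsAddHalf :=
  ((Set.countable_range fun m : ℤ => (m : ℝ) + 1/2).mono <| by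
    rintro _ ⟨m, rfl⟩; exact ⟨m, rfl⟩).measurableSet

theorem ae_mem_zero_half_one [IsProbabilityMeasure μ] {Z : Ω → ℝ} (hZ : Measurable Z)
    (h : (μ {ω | Z ω = 0}).toReal + (μ {ω | Z ω = 1/2}).toReal + (μ {ω | Z ω = 1}).toReal = 1) :
    ∀ᵐ ω ∂μ, Z ω ∈ ({0, 1/2, 1} : Finset ℝ) := by
  refine ae_mem_of_sum_measure_preimage_singleton_eq_one hZ ?_
  rwa [sum_insert (by norm_num), sum_insert (by norm_num), sum_singleton, ← add_assoc]

theorem ints_add_ints : ints + ints ⊆ ints := by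
  rintro _ ⟨_, ⟨a, rfl⟩, _, ⟨b, rfl⟩, rfl⟩
  exact ⟨a + b, by push_cast; ring⟩

theorem intsAddHalf_add_intsAddHalf : intsAddHalf + intsAddHalf ⊆ ints := by
  rintro _ ⟨_, ⟨a, rfl⟩, _, ⟨b, rfl⟩, rfl⟩
  exact ⟨a + b + 1, by push_cast; ring⟩

theorem ints_add_intsAddHalf : ints + intsAddHalf ⊆ intsAddHalf := by
  rintro _ ⟨_, ⟨a, rfl⟩, _, ⟨b, rfl⟩, rfl⟩
  exact ⟨a + b, by push_cast; ring⟩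

theorem intsAddHalf_add_ints : intsAddHalf + ints ⊆ intsAddHalf := by
  rw [add_comm]
  exact ints_add_intsAddHalf

theorem add_mem_ints_union_intsAddHalf {x y : ℝ} (hx : x ∈ ints ∪ intsAddHalf)
    (hy : y ∈ ints ∪ intsAddHalf) : x + y ∈ ints ∪ intsAddHalf := by
  rcases hx with hx | hx <;> rcases hy with hy | hy
  · exact Or.inl (ints_add_ints (Set.add_mem_add hx hy))
  · exact Or.inr (ints_add_intsAddHalf (Set.add_mem_add hx hy))
  · exact Or.inr (intsAddHalf_add_ints (Set.add_mem_add hx hy))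
  · exact Or.inl (intsAddHalf_add_intsAddHalf (Set.add_mem_add hx hy))

theorem sum_mem_ints_union_intsAddHalf {ι : Type*} (s : Finset ι) {f : ι → ℝ}
    (hf : ∀ i ∈ s, f i ∈ ({0, 1/2, 1} : Finset ℝ)) : ∑ i ∈ s, f i ∈ ints ∪ intsAddHalf := by
  refine sum_induction f (· ∈ ints ∪ intsAddHalf) (fun _ _ => add_mem_ints_union_intsAddHalf)
    (Or.inl ⟨0, by simp⟩) fun i hi => ?_
  rcases (by simpa using hf i hi : f i = 0 ∨ f i = 1/2 ∨ f i = 1) with h | h | h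
  · exact Or.inl ⟨0, by simp [h]⟩
  · exact Or.inr ⟨0, by simp [h]⟩
  · exact Or.inl ⟨1, by simp [h]⟩

theorem measure_add_mem_ints_ne_zero_and_measure_add_mem_intsAddHalf_ne_zero [NeZero μ]
    {Y Z : Ω → ℝ} (hYZ : IndepFun Y Z μ) (hY : ∀ᵐ ω ∂μ, Y ω ∈ ints ∪ intsAddHalf)
    (hZ : μ (Z ⁻¹' ints) ≠ 0) (hZ' : μ (Z ⁻¹' intsAddHalf) ≠ 0) :
    μ {ω | Y ω + Z ω ∈ ints} ≠ 0 ∧ μ {ω | Y ω + Z ω ∈ intsAddHalf} ≠ 0 := by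
  have hYpos : μ (Y ⁻¹' ints) ≠ 0 ∨ μ (Y ⁻¹' intsAddHalf) ≠ 0 := by
    by_contra! h
    obtain ⟨ω, hω, hωA, hωB⟩ := (hY.and ((measure_eq_zero_iff_ae_notMem.1 h.1).and
      (measure_eq_zero_iff_ae_notMem.1 h.2))).exists
    exact hω.elim hωA hωB
  have hpos {s t u : Set ℝ} (hs : MeasurableSet s) (ht : MeasurableSet t) (hstu : s + t ⊆ u)
      (hYs : μ (Y ⁻¹' s) ≠ 0) (hZt : μ (Z ⁻¹' t) ≠ 0) : μ {ω | Y ω + Z ω ∈ u} ≠ 0 :=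
    ((pos_iff_ne_zero.2 (mul_ne_zero hYs hZt)).trans_le
      (hYZ.measure_preimage_mul_le_measure_add_mem hs ht hstu)).ne'
  rcases hYpos with hYA | hYB
  · exact ⟨hpos measurableSet_ints measurableSet_ints ints_add_ints hYA hZ,
      hpos measurableSet_ints measurableSet_intsAddHalf ints_add_intsAddHalf hYA hZ'⟩
  · exact ⟨hpos measurableSet_intsAddHalf measurableSet_intsAddHalf
        intsAddHalf_add_intsAddHalf hYB hZ',
      hpos measurableSet_intsAddHalf measurableSet_ints intsAddHalf_add_ints hYB hZ⟩

theorem measure_eq_half_eq_one_of_measure_mem_ints_eq_zero [IsProbabilityMeasure μ]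
    {Z : Ω → ℝ} (hZ : Measurable Z) (hsupp : ∀ᵐ ω ∂μ, Z ω ∈ ({0, 1/2, 1} : Finset ℝ))
    (hints : μ (Z ⁻¹' ints) = 0) : μ {ω | Z ω = 1/2} = 1 := by
  refine (mem_ae_iff_prob_eq_one (hZ (measurableSet_singleton _))).1 ?_
  filter_upwards [hsupp, measure_eq_zero_iff_ae_notMem.1 hints] with ω hω hωints
  simp only [mem_insert, mem_singleton] at hω
  rcases hω with h0 | hhalf | h1
  · exact absurd ⟨0, by simp [h0]⟩ hωints
  · exact hhalf
  · exact absurd ⟨1, by simp [h1]⟩ hωints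

theorem measure_eq_half_eq_zero_or_eq_one [IsProbabilityMeasure μ]
    {ι : Type*} [Fintype ι] {X : ι → Ω → ℝ} (hmeas : ∀ i, Measurable (X i))
    (hindep : iIndepFun X μ) (hsupp : ∀ i, ∀ᵐ ω ∂μ, X i ω ∈ ({0, 1/2, 1} : Finset ℝ))
    (hdeg : μ {ω | ∑ i, X i ω ∈ ints} = 0 ∨ μ {ω | ∑ i, X i ω ∈ intsAddHalf} = 0) (i : ι) :
    μ {ω | X i ω = 1/2} = 0 ∨ μ {ω | X i ω = 1/2} = 1 := by
  by_contra! h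
  have hY : ∀ᵐ ω ∂μ, (∑ j ∈ univ.erase i, X j) ω ∈ ints ∪ intsAddHalf := by
    filter_upwards [ae_all_iff.2 hsupp] with ω hω
    rw [Finset.sum_apply]
    exact sum_mem_ints_union_intsAddHalf _ fun j _ => hω j
  have hsum (ω : Ω) : (∑ j ∈ univ.erase i, X j) ω + X i ω = ∑ j, X j ω := by
    rw [Finset.sum_apply, sum_erase_add _ _ (mem_univ i)]
  have hints : μ (X i ⁻¹' ints) ≠ 0 := fun h0 =>
    h.2 (measure_eq_half_eq_one_of_measure_mem_ints_eq_zero (hmeas i) (hsupp i) h0)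
  have hhalf : μ (X i ⁻¹' intsAddHalf) ≠ 0 := fun h0 =>
    h.1 (measure_mono_null (fun ω (hω : X i ω = 1/2) => by
      rw [Set.mem_preimage, hω]; exact ⟨0, by norm_num⟩) h0)
  have hpos := measure_add_mem_ints_ne_zero_and_measure_add_mem_intsAddHalf_ne_zero
    (hindep.indepFun_finsetSum_of_notMem hmeas (notMem_erase i univ)) hY hints hhalf
  simp only [hsum] at hpos
  exact hdeg.elim hpos.1 hpos.2

end PoissonTrinomial

open PoissonTrinomial

theorem poisson_trinomial_degenerate_general
    {Ω : Type*} [MeasureSpace Ω] [IsProbabilityMeasure (ℙ : Measure Ω)]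
    {n : ℕ} (X : Fin n → Ω → ℝ) (T W : Fin n → ℝ)
    (hmeas : ∀ i, Measurable (X i))
    (hindep : iIndepFun X ℙ)
    (hT : ∀ i, (ℙ {ω | X i ω = 1/2}).toReal = T i)
    (hW : ∀ i, (ℙ {ω | X i ω = 1}).toReal = W i)
    (hL : ∀ i, (ℙ {ω | X i ω = 0}).toReal = 1 - T i - W i)
    (hdeg : ℙ {ω | ∃ m : ℤ, (∑ i, X i ω) = (m : ℝ)} = 0 ∨
            ℙ {ω | ∃ m : ℤ, (∑ i, X i ω) = (m : ℝ) + 1/2} = 0) :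
    (∀ i, T i = 0 ∨ T i = 1) ∧
    (∀ t : ℝ,
      ℙ {ω | (∑ i, X i ω) =
          ((n : ℝ) - (univ.filter (fun i => T i = 0)).card) / 2 + t} =
      ℙ {ω | (∑ i ∈ univ.filter (fun i => T i = 0), X i ω) = t}) := by
  have hsupp (i : Fin n) : ∀ᵐ ω ∂ℙ, X i ω ∈ ({0, 1/2, 1} : Finset ℝ) :=
    ae_mem_zero_half_one (hmeas i) (by rw [hL, hT, hW]; ring)
  have hhalf := measure_eq_half_eq_zero_or_eq_one hmeas hindep hsupp hdeg
  have hT01 (i : Fin n) : T i = 0 ∨ T i = 1 := by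
    rcases hhalf i with h | h <;> rw [← hT i, h] <;> simp
  refine ⟨hT01, fun t => ?_⟩
  have hX (i : Fin n) (hi : i ∉ univ.filter fun i => T i = 0) : ∀ᵐ ω ∂ℙ, X i ω = 1/2 :=
    (mem_ae_iff_prob_eq_one (hmeas i (measurableSet_singleton _))).2 <|
      (hhalf i).resolve_left fun h => hi (by rw [mem_filter, ← hT i, h]; simp)
  have hshift := measure_sum_eq_add_eq_of_ae_eq_const hX t
  rwa [Fintype.card_fin, ← div_eq_mul_one_div] at hshift

/-- degenerate case: if `P(X ∈ ℤ) = 0` or `P(X ∈ ℤ + 1/2) = 0`, then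
every `T_i ∈ {0, 1}`, and with `k` the number of indices with `T_i = 0`, the
distribution of `X` is the Poisson binomial distribution of those `k` trials shifted
to the right by `(n - k)/2`. -/
theorem poisson_trinomial_degenerate
    {Ω : Type*} [MeasureSpace Ω] [IsProbabilityMeasure (ℙ : Measure Ω)]
    {n : ℕ} (X : Fin n → Ω → ℝ) (T W : Fin n → ℝ)
    (hmeas : ∀ i, Measurable (X i))
    (hindep : iIndepFun X ℙ)
    (hT0 : ∀ i, 0 ≤ T i) (hW0 : ∀ i, 0 ≤ W i) (hTW1 : ∀ i, T i + W i ≤ 1)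
    (hT : ∀ i, (ℙ {ω | X i ω = 1/2}).toReal = T i)
    (hW : ∀ i, (ℙ {ω | X i ω = 1}).toReal = W i)
    (hL : ∀ i, (ℙ {ω | X i ω = 0}).toReal = 1 - T i - W i)
    (hdeg : ℙ {ω | ∃ m : ℤ, (∑ i, X i ω) = (m : ℝ)} = 0 ∨
            ℙ {ω | ∃ m : ℤ, (∑ i, X i ω) = (m : ℝ) + 1/2} = 0) :
    (∀ i, T i = 0 ∨ T i = 1) ∧
    (∀ t : ℝ,
      ℙ {ω | (∑ i, X i ω) =
          ((n : ℝ) - (univ.filter (fun i => T i = 0)).card) / 2 + t} =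
      ℙ {ω | (∑ i ∈ univ.filter (fun i => T i = 0), X i ω) = t}) :=
  poisson_trinomial_degenerate_general X T W hmeas hindep hT hW hL hdeg
end
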